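/- arXiv:2107.12511 — 2 statements merged into one kernel-verified Lean document; each statement's English description precedes it below -/
import Mathlib

section
/- Let n ≥ 3. There exist R₀ ∈ (0,1) and sequences (b_k) and (θ_k) of functions on the slab D := B'_{R₀/2} × (0,1) ⊂ ℝⁿ, where B'_{R₀/2} is the open ball of radius R₀/2 in ℝ^{n−1} and x = (x', z) with x' ∈ ℝ^{n−1}, z ∈ (0,1), such that: (i) each b_k ∈ C^∞(D; ℝⁿ) is divergence-free and each θ_k ∈ C^∞(D) is nonnegative and solves the steady equation −Δθ_k + b_k·∇θ_k = 0 pointwise in D; (ii) sup_k ∫_D |b_k(x)|^{(n−1)/2} dx < ∞; (iii) sup_k ∫_D |θ_k(x)| dx < ∞; but (iv) sup_k ( sup_{B'_{R₀/4} × (1/4, 3/4)} θ_k ) = +∞. In particular, quantitative local boundedness fails for steady divergence-free drifts that are bounded in L^{(n−1)/2}. -/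
open MeasureTheory Metric Set Function
open scoped RealInnerProductSpace ENNReal NNReal

noncomputable section

/-- Laplacian of a function on Euclidean space. -/
def lap {n : ℕ} (f : EuclideanSpace ℝ (Fin n) → ℝ) (x : EuclideanSpace ℝ (Fin n)) : ℝ :=
  ∑ i, fderiv ℝ (fun y => fderiv ℝ f y (EuclideanSpace.single i (1:ℝ))) x
    (EuclideanSpace.single i (1:ℝ))

/-- Divergence of a vector field on Euclidean space. -/
def diverg {n : ℕ} (b : EuclideanSpace ℝ (Fin n) → EuclideanSpace ℝ (Fin n))
    (x : EuclideanSpace ℝ (Fin n)) : ℝ :=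
  ∑ i, fderiv ℝ (fun y => b y i) x (EuclideanSpace.single i (1:ℝ))

/-- Squared norm of the first `n - 1` coordinates, i.e. of `x'` where `x = (x', z)`. -/
def radSq {n : ℕ} (x : EuclideanSpace ℝ (Fin n)) : ℝ :=
  ∑ i : Fin n, if (i : ℕ) < n - 1 then (x i) ^ 2 else 0

namespace S7

abbrev X (m : ℕ) := EuclideanSpace ℝ (Fin (m+3))

variable {m : ℕ}

def L (m : ℕ) : Fin (m+3) := ⟨m+2, by omega⟩

def eps (k : ℕ) : ℝ := Real.exp (-(k:ℝ) - 1)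

lemma eps_pos (k : ℕ) : 0 < eps k := Real.exp_pos _

lemma eps_le (k : ℕ) : eps k ≤ 1/2 := by
  have h1 : eps k ≤ Real.exp (-1) :=
    Real.exp_le_exp.2 (by have := Nat.cast_nonneg (α := ℝ) k; linarith)
  have h2 : Real.exp (-1) ≤ 1/2 := by
    rw [Real.exp_neg]
    rw [inv_le_comm₀ (Real.exp_pos 1) (by norm_num)]
    have := Real.add_one_le_exp (1:ℝ)
    linarith
  linarith

lemma radSq_eq (x : X m) : radSq x = ∑ i ∈ Finset.univ.erase (L m), (x i)^2 := by
  unfold radSq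
  rw [← Finset.sum_erase_add _ _ (Finset.mem_univ (L m))]
  have hL : ¬ ((L m : ℕ) < m + 3 - 1) := by simp [L]
  rw [if_neg hL, add_zero]
  refine Finset.sum_congr rfl fun i hi => ?_
  rw [if_pos]
  have hne : i ≠ L m := (Finset.mem_erase.1 hi).1
  have : (i:ℕ) ≠ m + 2 := fun h => hne (Fin.ext (by simpa [L] using h))
  have := i.isLt
  omega

lemma radSq_nonneg (x : X m) : 0 ≤ radSq x := by
  rw [radSq_eq]; positivity

lemma sq_le_radSq (x : X m) {i : Fin (m+3)} (hi : (i:ℕ) < m+2) : (x i)^2 ≤ radSq x := by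
  rw [radSq_eq]
  refine Finset.single_le_sum (fun j _ => sq_nonneg (x j)) ?_
  refine Finset.mem_erase.2 ⟨fun h => ?_, Finset.mem_univ _⟩
  rw [h] at hi; simp [L] at hi

def sf (m k : ℕ) (x : X m) : ℝ := radSq x + (eps k)^2

lemma sf_pos (k : ℕ) (x : X m) : 0 < sf m k x :=
  add_pos_of_nonneg_of_pos (radSq_nonneg x) (pow_pos (eps_pos k) 2)

def Ff (m k : ℕ) (x : X m) : ℝ := 1 - Real.log (sf m k x) / 2

def th (m k : ℕ) (x : X m) : ℝ := Ff m k x * Real.exp (x (L m))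

def hf (m k : ℕ) (x : X m) : ℝ :=
  1 - (((m:ℝ)+2) * (eps k)^2 + (m:ℝ) * radSq x) / ((sf m k x)^2 * Ff m k x)

def bf (m k : ℕ) (x : X m) : X m := EuclideanSpace.single (L m) (hf m k x)

/-! ## derivatives -/

def DR (m : ℕ) (x : X m) : X m →L[ℝ] ℝ :=
  ∑ i : Fin (m+3), (if (i:ℕ) < m+2 then 2 * x i else 0) •
    (EuclideanSpace.proj i : X m →L[ℝ] ℝ)

lemma proj_single (i j : Fin (m+3)) (a : ℝ) :
    (EuclideanSpace.proj i : X m →L[ℝ] ℝ) (EuclideanSpace.single j a) =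
      if i = j then a else 0 := by
  show (EuclideanSpace.single j a : X m) i = _
  simp [EuclideanSpace.single_apply]

lemma DR_apply_single (x : X m) (i : Fin (m+3)) :
    DR m x (EuclideanSpace.single i 1) = if (i:ℕ) < m+2 then 2 * x i else 0 := by
  unfold DR
  rw [ContinuousLinearMap.sum_apply]
  rw [Finset.sum_eq_single i]
  · split_ifs with hc <;> simp [proj_single]
  · intro j _ hj
    split_ifs with hc <;> simp [proj_single, if_neg hj]
  · simp

lemma DR_single_L (x : X m) : DR m x (EuclideanSpace.single (L m) 1) = 0 := by
  rw [DR_apply_single, if_neg]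
  simp [L]

lemma hasFDerivAt_radSq (x : X m) : HasFDerivAt radSq (DR m x) x := by
  unfold DR
  have hre : (radSq : X m → ℝ) =
      fun y => ∑ i : Fin (m+3), if (i:ℕ) < m+3-1 then (y i)^2 else 0 := rfl
  rw [hre]
  refine HasFDerivAt.fun_sum fun i _ => ?_
  by_cases hi : (i:ℕ) < m+2
  · have h3 : (i:ℕ) < m+3-1 := by omega
    simp only [if_pos hi, if_pos h3]
    have hp : HasFDerivAt (fun y : X m => y i)
        (EuclideanSpace.proj i : X m →L[ℝ] ℝ) x :=
      (EuclideanSpace.proj i : X m →L[ℝ] ℝ).hasFDerivAt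
    have h2 := hp.mul hp
    have hre2 : (fun y : X m => (y i)^2) = fun y : X m => y i * y i := by
      funext y; ring
    rw [hre2]
    refine h2.congr_fderiv ?_
    ext v
    simp
    ring
  · have h3 : ¬ ((i:ℕ) < m+3-1) := by omega
    simp only [if_neg hi, if_neg h3]
    simpa using (hasFDerivAt_const (0:ℝ) x)

lemma hasFDerivAt_sf (k : ℕ) (x : X m) : HasFDerivAt (sf m k) (DR m x) x :=
  (hasFDerivAt_radSq x).add_const _

lemma hasFDerivAt_Ff (k : ℕ) (x : X m) :
    HasFDerivAt (Ff m k) ((-(sf m k x)⁻¹ / 2) • DR m x) x := by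
  have h1 : HasFDerivAt (fun y => Real.log (sf m k y)) ((sf m k x)⁻¹ • DR m x) x :=
    (hasFDerivAt_sf k x).log (sf_pos k x).ne'
  have hre : Ff m k = fun y => 1 - (2:ℝ)⁻¹ * Real.log (sf m k y) := by
    funext y; simp [Ff]; ring
  rw [hre]
  have h2 := (h1.const_mul ((2:ℝ)⁻¹)).const_sub 1
  refine h2.congr_fderiv ?_
  ext v
  simp
  ring

lemma hasFDerivAt_expL (x : X m) :
    HasFDerivAt (fun y : X m => Real.exp (y (L m)))
      (Real.exp (x (L m)) • (EuclideanSpace.proj (L m) : X m →L[ℝ] ℝ)) x :=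
  (EuclideanSpace.proj (L m) : X m →L[ℝ] ℝ).hasFDerivAt.exp

def DT (m k : ℕ) (x : X m) : X m →L[ℝ] ℝ :=
  Ff m k x • (Real.exp (x (L m)) • (EuclideanSpace.proj (L m) : X m →L[ℝ] ℝ)) +
    Real.exp (x (L m)) • ((-(sf m k x)⁻¹ / 2) • DR m x)

lemma hasFDerivAt_th (k : ℕ) (x : X m) : HasFDerivAt (th m k) (DT m k x) x :=
  (hasFDerivAt_Ff k x).mul (hasFDerivAt_expL x)

lemma fderiv_th (k : ℕ) (x : X m) : fderiv ℝ (th m k) x = DT m k x :=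
  (hasFDerivAt_th k x).fderiv

lemma fderiv_th_single_L (k : ℕ) (x : X m) :
    fderiv ℝ (th m k) x (EuclideanSpace.single (L m) 1) = th m k x := by
  rw [fderiv_th]
  unfold DT
  simp [DR_single_L, proj_single, th]

lemma fderiv_th_single_lt (k : ℕ) (x : X m) {i : Fin (m+3)} (hi : (i:ℕ) < m+2) :
    fderiv ℝ (th m k) x (EuclideanSpace.single i 1) =
      -(Real.exp (x (L m)) * (x i / sf m k x)) := by
  rw [fderiv_th]
  unfold DT
  have hiL : (L m) ≠ i := by
    intro h; rw [← h] at hi; simp [L] at hi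
  simp [DR_apply_single, proj_single, if_pos hi, if_neg hiL]
  field_simp

lemma snd_L (k : ℕ) (x : X m) :
    fderiv ℝ (fun y => fderiv ℝ (th m k) y (EuclideanSpace.single (L m) 1)) x
      (EuclideanSpace.single (L m) 1) = th m k x := by
  have hre : (fun y : X m => fderiv ℝ (th m k) y (EuclideanSpace.single (L m) 1)) = th m k :=
    funext fun y => fderiv_th_single_L k y
  rw [hre]
  exact fderiv_th_single_L k x

lemma snd_lt (k : ℕ) (x : X m) {i : Fin (m+3)} (hi : (i:ℕ) < m+2) :
    fderiv ℝ (fun y => fderiv ℝ (th m k) y (EuclideanSpace.single i 1)) x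
      (EuclideanSpace.single i 1) =
      -(Real.exp (x (L m)) * (1 / sf m k x - 2 * (x i)^2 / (sf m k x)^2)) := by
  have hre : (fun y : X m => fderiv ℝ (th m k) y (EuclideanSpace.single i 1)) =
      fun y => -(Real.exp (y (L m)) * (y i * (sf m k y)⁻¹)) := by
    funext y
    rw [fderiv_th_single_lt k y hi]
    rw [div_eq_mul_inv]
  rw [hre]
  have hp : HasFDerivAt (fun y : X m => y i)
      (EuclideanSpace.proj i : X m →L[ℝ] ℝ) x :=
    (EuclideanSpace.proj i : X m →L[ℝ] ℝ).hasFDerivAt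
  have hinv : HasFDerivAt (fun y : X m => (sf m k y)⁻¹)
      ((-((sf m k x)^2)⁻¹) • DR m x) x :=
    (hasDerivAt_inv (sf_pos k x).ne').comp_hasFDerivAt x (hasFDerivAt_sf k x)
  have hq := hp.mul hinv
  have hg := ((hasFDerivAt_expL x).mul hq).neg
  rw [show fderiv ℝ (fun y : X m => -(Real.exp (y (L m)) * (y i * (sf m k y)⁻¹))) x = _ from
    hg.fderiv]
  have hiL : (L m) ≠ i := by
    intro h; rw [← h] at hi; simp [L] at hi
  have hs := (sf_pos k x).ne'
  simp [DR_apply_single, proj_single, if_pos hi, if_neg hiL]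
  field_simp
  ring

lemma card_erase_L : (Finset.univ.erase (L m)).card = m + 2 := by
  rw [Finset.card_erase_of_mem (Finset.mem_univ _)]
  simp

lemma lap_th (k : ℕ) (x : X m) :
    lap (th m k) x = th m k x -
      Real.exp (x (L m)) *
        ((((m:ℝ)+2) * (eps k)^2 + (m:ℝ) * radSq x) / (sf m k x)^2) := by
  unfold lap
  rw [← Finset.sum_erase_add _ _ (Finset.mem_univ (L m))]
  rw [snd_L]
  have hsum : ∑ i ∈ Finset.univ.erase (L m),
      fderiv ℝ (fun y => fderiv ℝ (th m k) y (EuclideanSpace.single i 1)) x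
        (EuclideanSpace.single i 1)
      = ∑ i ∈ Finset.univ.erase (L m),
        (-(Real.exp (x (L m)) / sf m k x) +
          (2 * Real.exp (x (L m)) / (sf m k x)^2) * (x i)^2) := by
    refine Finset.sum_congr rfl fun i hil => ?_
    have hne : i ≠ L m := (Finset.mem_erase.1 hil).1
    have hi : (i:ℕ) < m+2 := by
      have h1 : (i:ℕ) ≠ m + 2 := fun h => hne (Fin.ext (by simpa [L] using h))
      have := i.isLt
      omega
    rw [snd_lt k x hi]
    have hs := (sf_pos k x).ne'
    field_simp
    ring
  rw [hsum, Finset.sum_add_distrib, Finset.sum_const, ← Finset.mul_sum, ← radSq_eq,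
    card_erase_L]
  have hs := (sf_pos k x).ne'
  have hsf : sf m k x = radSq x + (eps k)^2 := rfl
  have hs' : radSq x + (eps k)^2 ≠ 0 := by rw [← hsf]; exact hs
  simp only [hsf]
  simp only [nsmul_eq_mul, Nat.cast_add, Nat.cast_ofNat]
  field_simp
  ring

lemma Wne (k : ℕ) (x : X m) (hF : Ff m k x ≠ 0) :
    sf m k x * sf m k x * Ff m k x ≠ 0 :=
  mul_ne_zero (mul_ne_zero (sf_pos k x).ne' (sf_pos k x).ne') hF

lemma fderiv_hf_single_L (k : ℕ) (x : X m) (hF : Ff m k x ≠ 0) :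
    fderiv ℝ (hf m k) x (EuclideanSpace.single (L m) 1) = 0 := by
  have hre : hf m k = fun y =>
      1 - (((m:ℝ)+2) * (eps k)^2 + (m:ℝ) * radSq y) *
        (sf m k y * sf m k y * Ff m k y)⁻¹ := by
    funext y
    simp only [hf]
    rw [div_eq_mul_inv]
    ring_nf
  have hN : HasFDerivAt
      (fun y : X m => ((m:ℝ)+2) * (eps k)^2 + (m:ℝ) * radSq y)
      ((m:ℝ) • DR m x) x := by
    have := ((hasFDerivAt_radSq x).const_mul (m:ℝ)).const_add (((m:ℝ)+2) * (eps k)^2)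
    exact this
  have hW : HasFDerivAt (fun y : X m => sf m k y * sf m k y * Ff m k y) _ x :=
    ((hasFDerivAt_sf k x).mul (hasFDerivAt_sf k x)).mul (hasFDerivAt_Ff k x)
  have hWinv0 := (hasDerivAt_inv (Wne k x hF)).comp_hasFDerivAt x hW
  have hWinv : HasFDerivAt (fun y : X m => (sf m k y * sf m k y * Ff m k y)⁻¹)
      (-((sf m k x * sf m k x * Ff m k x) ^ 2)⁻¹ •
        ((sf m k x * sf m k x) • (-(sf m k x)⁻¹ / 2) • DR m x +
          Ff m k x • (sf m k x • DR m x + sf m k x • DR m x))) x := hWinv0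
  have hfull := (hN.mul hWinv).const_sub 1
  rw [hre, show fderiv ℝ (fun y : X m => 1 - (((m:ℝ)+2) * (eps k)^2 + (m:ℝ) * radSq y) *
          (sf m k y * sf m k y * Ff m k y)⁻¹) x = _ from hfull.fderiv]
  simp [DR_single_L]

lemma diverg_bf (k : ℕ) (x : X m) (hF : Ff m k x ≠ 0) : diverg (bf m k) x = 0 := by
  unfold diverg
  refine Finset.sum_eq_zero fun i _ => ?_
  by_cases hiL : i = L m
  · subst hiL
    have hre : (fun y : X m => bf m k y (L m)) = hf m k := by
      funext y; simp [bf, EuclideanSpace.single_apply]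
    rw [hre]
    exact fderiv_hf_single_L k x hF
  · have hre : (fun y : X m => bf m k y i) = fun _ => (0:ℝ) := by
      funext y; simp [bf, EuclideanSpace.single_apply, hiL]
    rw [hre]
    simp

lemma inner_bf_grad (k : ℕ) (x : X m) :
    ⟪bf m k x, gradient (th m k) x⟫ = hf m k x * th m k x := by
  have h1 : ⟪bf m k x, gradient (th m k) x⟫ = fderiv ℝ (th m k) x (bf m k x) := by
    rw [real_inner_comm]
    exact InnerProductSpace.toDual_symm_apply
  rw [h1]
  have h2 : bf m k x = hf m k x • (EuclideanSpace.single (L m) 1 : X m) := by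
    ext j
    simp only [bf, PiLp.smul_apply, EuclideanSpace.single_apply, smul_eq_mul]
    split_ifs <;> simp
  rw [h2, (fderiv ℝ (th m k) x).map_smul, fderiv_th_single_L]
  simp

lemma pde (k : ℕ) (x : X m) (hF : Ff m k x ≠ 0) :
    -lap (th m k) x + ⟪bf m k x, gradient (th m k) x⟫ = 0 := by
  rw [lap_th, inner_bf_grad]
  simp only [hf, th]
  have hs := (sf_pos k x).ne'
  field_simp
  ring

/-! ## the domain -/

def Dst (m : ℕ) : Set (X m) :=
  {x : X m | radSq x < ((1:ℝ)/2/2)^2 ∧ x (L m) ∈ Set.Ioo (0:ℝ) 1}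

lemma radSq_lt (k : ℕ) {x : X m} (hx : x ∈ Dst m) : radSq x < 1/16 := by
  have := hx.1; norm_num at this ⊢; linarith

lemma sf_lt_one (k : ℕ) {x : X m} (hx : x ∈ Dst m) : sf m k x < 1 := by
  have h1 := radSq_lt k hx
  have h2 : (eps k)^2 ≤ 1/4 := by
    have := eps_le k
    nlinarith [eps_pos k]
  unfold sf; linarith

lemma Ff_ge_one (k : ℕ) {x : X m} (hx : x ∈ Dst m) : 1 ≤ Ff m k x := by
  have hlog := Real.log_neg (sf_pos k x) (sf_lt_one k hx)
  unfold Ff; linarith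

lemma Ff_ne (k : ℕ) {x : X m} (hx : x ∈ Dst m) : Ff m k x ≠ 0 := by
  have := Ff_ge_one k hx; linarith

/-! ## smoothness -/

lemma contDiff_radSq : ContDiff ℝ (⊤ : ℕ∞) (radSq : X m → ℝ) := by
  have hre : (radSq : X m → ℝ) =
      fun y => ∑ i : Fin (m+3), if (i:ℕ) < m+3-1 then (y i)^2 else 0 := rfl
  rw [hre]
  apply ContDiff.sum
  intro i _
  by_cases hi : (i:ℕ) < m+3-1
  · simp only [if_pos hi]
    exact ((EuclideanSpace.proj i : X m →L[ℝ] ℝ).contDiff).pow 2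
  · simp only [if_neg hi]
    exact contDiff_const

lemma contDiff_sf (k : ℕ) : ContDiff ℝ (⊤ : ℕ∞) (sf m k) :=
  contDiff_radSq.add contDiff_const

lemma contDiff_Ff (k : ℕ) : ContDiff ℝ (⊤ : ℕ∞) (Ff m k) := by
  rw [contDiff_iff_contDiffAt]
  intro x
  have hlog : ContDiffAt ℝ (⊤ : ℕ∞) Real.log (sf m k x) :=
    Real.contDiffAt_log.2 (sf_pos k x).ne'
  exact contDiffAt_const.sub ((hlog.comp x (contDiff_sf k).contDiffAt).div_const 2)

lemma contDiff_th (k : ℕ) : ContDiff ℝ (⊤ : ℕ∞) (th m k) :=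
  (contDiff_Ff k).mul
    (Real.contDiff_exp.comp (EuclideanSpace.proj (L m) : X m →L[ℝ] ℝ).contDiff)

lemma bf_eq (k : ℕ) : bf m k = fun x => hf m k x • (EuclideanSpace.single (L m) 1 : X m) := by
  funext x
  ext j
  simp only [bf, PiLp.smul_apply, EuclideanSpace.single_apply, smul_eq_mul]
  split_ifs <;> simp

lemma contDiffOn_hf (k : ℕ) : ContDiffOn ℝ (⊤ : ℕ∞) (hf m k) (Dst m) := by
  intro x hx
  apply ContDiffAt.contDiffWithinAt
  have hnum : ContDiffAt ℝ (⊤ : ℕ∞) (fun y : X m => ((m:ℝ)+2) * (eps k)^2 + (m:ℝ) * radSq y) x :=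
    contDiffAt_const.add (contDiffAt_const.mul contDiff_radSq.contDiffAt)
  have hden : ContDiffAt ℝ (⊤ : ℕ∞) (fun y : X m => (sf m k y)^2 * Ff m k y) x :=
    ((contDiff_sf k).contDiffAt.pow 2).mul (contDiff_Ff k).contDiffAt
  have hdne : (sf m k x)^2 * Ff m k x ≠ 0 :=
    mul_ne_zero (pow_ne_zero 2 (sf_pos k x).ne') (Ff_ne k hx)
  exact contDiffAt_const.sub (hnum.div hden hdne)

lemma contDiffOn_bf (k : ℕ) : ContDiffOn ℝ (⊤ : ℕ∞) (bf m k) (Dst m) := by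
  rw [bf_eq]
  exact (contDiffOn_hf k).smul contDiffOn_const

/-! ## positivity and blowup -/

lemma th_nonneg (k : ℕ) {x : X m} (hx : x ∈ Dst m) : 0 ≤ th m k x := by
  have h1 := Ff_ge_one k hx
  have h2 := Real.exp_pos (x (L m))
  unfold th; nlinarith

def x0 (m : ℕ) : X m := EuclideanSpace.single (L m) (1/2)

lemma radSq_x0 : radSq (x0 m) = 0 := by
  rw [radSq_eq]
  refine Finset.sum_eq_zero fun i hi => ?_
  have hne : i ≠ L m := (Finset.mem_erase.1 hi).1
  simp [x0, EuclideanSpace.single_apply, hne]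

lemma x0_L : x0 m (L m) = 1/2 := by
  simp [x0, EuclideanSpace.single_apply]

lemma th_x0 (k : ℕ) : ((k:ℝ) + 2) ≤ th m k (x0 m) := by
  have hsf : sf m k (x0 m) = (eps k)^2 := by
    unfold sf; rw [radSq_x0]; ring
  have hF : Ff m k (x0 m) = (k:ℝ) + 2 := by
    unfold Ff
    rw [hsf]
    rw [Real.log_pow]
    unfold eps
    rw [Real.log_exp]
    push_cast
    ring
  have hexp : 1 ≤ Real.exp (x0 m (L m)) := by
    rw [x0_L]
    exact Real.one_le_exp (by norm_num)
  have hk : (0:ℝ) ≤ (k:ℝ) + 2 := by positivity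
  unfold th
  rw [hF]
  nlinarith

/-! ## volume bounds -/

lemma measurable_radSq : Measurable (radSq : X m → ℝ) :=
  contDiff_radSq.continuous.measurable

lemma equiv_apply (x : X m) (i : Fin (m+3)) :
    ((MeasurableEquiv.toLp 2 (Fin (m+3) → ℝ)).symm) x i = x i := rfl

lemma vol_box (t : ℝ) :
    volume {x : X m | radSq x < t ∧ x (L m) ∈ Set.Ioo (0:ℝ) 1} ≤
      ENNReal.ofReal ((2*Real.sqrt t)^(m+2)) := by
  set B : Set (Fin (m+3) → ℝ) := Set.univ.pi fun i =>
    if (i:ℕ) < m+2 then Set.Ioo (-Real.sqrt t) (Real.sqrt t) else Set.Ioo 0 1 with hB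
  have hBm : MeasurableSet B := by
    apply MeasurableSet.univ_pi
    intro i
    split_ifs <;> exact measurableSet_Ioo
  have hsub : {x : X m | radSq x < t ∧ x (L m) ∈ Set.Ioo (0:ℝ) 1} ⊆
      ((MeasurableEquiv.toLp 2 (Fin (m+3) → ℝ)).symm) ⁻¹' B := by
    intro x hx
    intro i _
    rw [equiv_apply]
    by_cases hi : (i:ℕ) < m+2
    · simp only [if_pos hi]
      have h1 : (x i)^2 < t := lt_of_le_of_lt (sq_le_radSq x hi) hx.1
      have h2 : |x i| < Real.sqrt t := by
        rw [← Real.sqrt_sq_eq_abs]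
        exact Real.sqrt_lt_sqrt (sq_nonneg _) h1
      exact abs_lt.1 h2
    · simp only [if_neg hi]
      have hieq : i = L m := by
        apply Fin.ext
        have := i.isLt
        simp only [L]
        omega
      rw [hieq]
      exact hx.2
  calc volume {x : X m | radSq x < t ∧ x (L m) ∈ Set.Ioo (0:ℝ) 1}
      ≤ volume (((MeasurableEquiv.toLp 2 (Fin (m+3) → ℝ)).symm) ⁻¹' B) := measure_mono hsub
    _ = volume B :=
        (EuclideanSpace.volume_preserving_symm_measurableEquiv_toLp (Fin (m+3))).measure_preimage
          hBm.nullMeasurableSet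
    _ ≤ ENNReal.ofReal ((2*Real.sqrt t)^(m+2)) := by
        rw [hB, volume_pi_pi]
        rw [← Finset.prod_erase_mul _ _ (Finset.mem_univ (L m))]
        have hL : ¬ ((L m : ℕ) < m+2) := by simp [L]
        rw [apply_ite volume, if_neg hL]
        have h1 : volume (Set.Ioo (0:ℝ) 1) = 1 := by
          rw [Real.volume_Ioo]; norm_num
        rw [h1, mul_one]
        have h2 : ∀ i ∈ Finset.univ.erase (L m),
            volume (if (i:ℕ) < m+2 then Set.Ioo (-Real.sqrt t) (Real.sqrt t)
              else Set.Ioo (0:ℝ) 1) = ENNReal.ofReal (2 * Real.sqrt t) := by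
          intro i hi
          have hne : i ≠ L m := (Finset.mem_erase.1 hi).1
          have hlt : (i:ℕ) < m+2 := by
            have h3 : (i:ℕ) ≠ m + 2 := fun h => hne (Fin.ext (by simpa [L] using h))
            have := i.isLt
            omega
          rw [if_pos hlt, Real.volume_Ioo]
          congr 1
          ring
        rw [Finset.prod_congr rfl h2, Finset.prod_const, card_erase_L]
        rw [← ENNReal.ofReal_pow (by positivity)]

/-! ## master shell estimate -/

lemma measurableSet_lt_rad (t : ℝ) : MeasurableSet {y : X m | radSq y < t} :=
  measurableSet_lt measurable_radSq measurable_const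

lemma shell_bound (g : X m → ℝ≥0∞) (c : ℕ → ℝ≥0∞) (t : ℕ → ℝ)
    (hpt : ∀ x ∈ Dst m, ∃ j, g x ≤ c j ∧ radSq x < t j) :
    ∫⁻ x in Dst m, g x ≤ ∑' j, c j * ENNReal.ofReal ((2*Real.sqrt (t j))^(m+2)) := by
  have hmeas : ∀ j : ℕ, Measurable fun x : X m =>
      c j * ({y : X m | radSq y < t j}.indicator 1 x) :=
    fun j => measurable_const.mul
      (Measurable.indicator measurable_const (measurableSet_lt_rad (t j)))
  calc ∫⁻ x in Dst m, g x
      ≤ ∫⁻ x in Dst m, ∑' j, c j * ({y : X m | radSq y < t j}.indicator 1 x) := by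
        apply setLIntegral_mono (Measurable.ennreal_tsum hmeas)
        intro x hx
        obtain ⟨j, hgj, hrj⟩ := hpt x hx
        refine le_trans ?_ (ENNReal.le_tsum j)
        rw [Set.indicator_of_mem (show x ∈ {y : X m | radSq y < t j} from hrj)]
        simpa using hgj
    _ = ∑' j, ∫⁻ x in Dst m, c j * ({y : X m | radSq y < t j}.indicator 1 x) :=
        lintegral_tsum fun j => (hmeas j).aemeasurable
    _ ≤ ∑' j, c j * ENNReal.ofReal ((2*Real.sqrt (t j))^(m+2)) := by
        refine ENNReal.tsum_le_tsum fun j => ?_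
        have hind : Measurable ({y : X m | radSq y < t j}.indicator (1 : X m → ℝ≥0∞)) :=
          Measurable.indicator measurable_const (measurableSet_lt_rad (t j))
        rw [lintegral_const_mul (c j) hind]
        refine mul_le_mul_right ?_ _
        rw [lintegral_indicator (measurableSet_lt_rad (t j))]
        simp only [Pi.one_apply]
        rw [MeasureTheory.setLIntegral_one]
        rw [Measure.restrict_apply (measurableSet_lt_rad (t j))]
        refine le_trans (measure_mono ?_) (vol_box (t j))
        intro y hy
        exact ⟨hy.1, hy.2.2⟩

/-! ## shells and sums -/

lemma exists_shell_down {a : ℝ} (h0 : 0 < a) (h1 : a < 1) :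
    ∃ j : ℕ, (1/4:ℝ)^(j+1) ≤ a ∧ a < (1/4:ℝ)^j := by
  have hex : ∃ n : ℕ, (1/4:ℝ)^(n+1) ≤ a := by
    obtain ⟨n, hn⟩ := exists_pow_lt_of_lt_one h0 (by norm_num : (1/4:ℝ) < 1)
    refine ⟨n, le_of_lt (lt_of_le_of_lt ?_ hn)⟩
    apply pow_le_pow_of_le_one (by norm_num) (by norm_num)
    omega
  refine ⟨Nat.find hex, Nat.find_spec hex, ?_⟩
  rcases Nat.eq_zero_or_pos (Nat.find hex) with h | h
  · rw [h]; simpa using h1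
  · have hm := Nat.find_min hex (Nat.sub_lt h one_pos)
    have h2 : ¬ ((1/4:ℝ)^(Nat.find hex) ≤ a) := by
      have hc : Nat.find hex - 1 + 1 = Nat.find hex := Nat.succ_pred_eq_of_pos h
      rw [← hc]
      exact hm
    linarith

lemma exists_shell_up {a e : ℝ} (he : 0 < e) (ha : e ≤ a) :
    ∃ j : ℕ, (4:ℝ)^j * e ≤ a ∧ a < (4:ℝ)^(j+1) * e := by
  have hex : ∃ n : ℕ, a < (4:ℝ)^(n+1) * e := by
    obtain ⟨n, hn⟩ := pow_unbounded_of_one_lt (a / e) (by norm_num : (1:ℝ) < 4)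
    refine ⟨n, ?_⟩
    have h2 : a / e < 4^n := hn
    have h3 : a < 4^n * e := by
      rw [div_lt_iff₀ he] at h2; linarith
    have h4 : (4:ℝ)^n ≤ 4^(n+1) := by
      apply pow_le_pow_right₀ (by norm_num); omega
    nlinarith
  refine ⟨Nat.find hex, ?_, Nat.find_spec hex⟩
  rcases Nat.eq_zero_or_pos (Nat.find hex) with h | h
  · rw [h]; simpa using ha
  · have hm := Nat.find_min hex (Nat.sub_lt h one_pos)
    have hc : Nat.find hex - 1 + 1 = Nat.find hex := Nat.succ_pred_eq_of_pos h
    rw [← hc]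
    push_neg at hm
    exact hm

lemma ofReal_half_pow (j : ℕ) : ENNReal.ofReal ((1/2:ℝ)^j) = (ENNReal.ofReal (1/2))^j :=
  ENNReal.ofReal_pow (by norm_num) j

lemma tsum_geo_bound (K : ℝ) (hK : 0 ≤ K) :
    ∑' j : ℕ, ENNReal.ofReal (K * (1/2:ℝ)^j) ≤ ENNReal.ofReal (2*K) := by
  have h1 : ∀ j : ℕ, ENNReal.ofReal (K * (1/2:ℝ)^j) =
      ENNReal.ofReal K * (ENNReal.ofReal (1/2))^j := by
    intro j
    rw [ENNReal.ofReal_mul hK, ofReal_half_pow]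
  rw [tsum_congr h1, ENNReal.tsum_mul_left, ENNReal.tsum_geometric]
  have h2 : ENNReal.ofReal (1/2:ℝ) = 2⁻¹ := by
    rw [ENNReal.ofReal_div_of_pos (by norm_num), ENNReal.ofReal_one, ENNReal.ofReal_ofNat,
      one_div]
  rw [h2, ENNReal.one_sub_inv_two, inv_inv, ENNReal.ofReal_mul (by norm_num)]
  rw [mul_comm]
  simp [ENNReal.ofReal_ofNat]

lemma quarter_pow (j : ℕ) : (1/4:ℝ)^j = ((1/2:ℝ)^j)^2 := by
  rw [show (1/4:ℝ) = (1/2:ℝ)^2 by norm_num, ← pow_mul, ← pow_mul, Nat.mul_comm]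

lemma nat_two_pow (j : ℕ) : j + 2 ≤ 2^(j+1) := by
  induction j with
  | zero => norm_num
  | succ i ih =>
    have h := Nat.one_le_two_pow (n := i+1)
    rw [pow_succ]
    omega

lemma real_two_pow (j : ℕ) : (j:ℝ) + 2 ≤ 2^(j+1) := by
  have := nat_two_pow j
  exact_mod_cast this

/-! ## the θ integral bound -/

lemma th_le_on_shell (k : ℕ) {x : X m} (hx : x ∈ Dst m) {j : ℕ}
    (hs : (1/4:ℝ)^(j+1) ≤ sf m k x) : |th m k x| ≤ 3*((j:ℝ)+2) := by
  have hs0 := sf_pos k x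
  have hlog : Real.log ((1/4:ℝ)^(j+1)) ≤ Real.log (sf m k x) :=
    Real.log_le_log (by positivity) hs
  have hlog2 : Real.log ((1/4:ℝ)^(j+1)) = -(((j:ℝ)+1) * Real.log 4) := by
    rw [Real.log_pow, one_div, Real.log_inv]
    push_cast; ring
  have hlog4 : Real.log 4 ≤ 2 := by
    have h2 : Real.log 4 = 2 * Real.log 2 := by
      rw [show (4:ℝ) = 2^2 by norm_num, Real.log_pow]; push_cast; ring
    have := Real.log_two_lt_d9
    linarith
  have hF : Ff m k x ≤ (j:ℝ) + 2 := by
    unfold Ff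
    have : -(((j:ℝ)+1) * 2) ≤ Real.log (sf m k x) := by
      have hge : -(((j:ℝ)+1)*2) ≤ -(((j:ℝ)+1) * Real.log 4) := by
        have hj : (0:ℝ) ≤ (j:ℝ)+1 := by positivity
        nlinarith
      linarith [hlog2 ▸ hlog]
    linarith
  have hF1 : 1 ≤ Ff m k x := Ff_ge_one k hx
  have hexp : Real.exp (x (L m)) ≤ 3 := by
    have h1 : Real.exp (x (L m)) ≤ Real.exp 1 := Real.exp_le_exp.2 (le_of_lt hx.2.2)
    have := Real.exp_one_lt_d9
    linarith
  have hexp0 : 0 < Real.exp (x (L m)) := Real.exp_pos _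
  have hth : 0 ≤ th m k x := th_nonneg k hx
  rw [abs_of_nonneg hth]
  unfold th
  nlinarith

lemma th_integral_bound (k : ℕ) :
    ∫⁻ x in Dst m, (‖th m k x‖₊ : ℝ≥0∞) ≤ ENNReal.ofReal (12 * 2^(m+2)) := by
  have happ := shell_bound (m := m) (fun x => (‖th m k x‖₊ : ℝ≥0∞))
    (fun j => ENNReal.ofReal (3*((j:ℝ)+2))) (fun j => (1/4:ℝ)^j) ?_
  · refine le_trans happ ?_
    have hEq : ENNReal.ofReal (2*(6 * 2^(m+2):ℝ)) = ENNReal.ofReal (12 * 2^(m+2)) := by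
      rw [show (2*(6*2^(m+2):ℝ)) = 12*2^(m+2) by ring]
    rw [← hEq]
    refine le_trans (ENNReal.tsum_le_tsum (fun j => ?_)) (tsum_geo_bound (6 * 2^(m+2)) (by positivity))
    rw [← ENNReal.ofReal_mul (by positivity)]
    apply ENNReal.ofReal_le_ofReal
    have hsq : Real.sqrt ((1/4:ℝ)^j) = (1/2:ℝ)^j := by
      rw [quarter_pow]
      exact Real.sqrt_sq (by positivity)
    rw [hsq]
    have hb : (2*(1/2:ℝ)^j)^(m+2) ≤ 2^(m+2) * ((1/4:ℝ)^j) := by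
      rw [mul_pow]
      have h1 : ((1/2:ℝ)^j)^(m+2) ≤ ((1/2:ℝ)^j)^2 := by
        apply pow_le_pow_of_le_one (by positivity) (by apply pow_le_one₀ <;> norm_num)
        omega
      have h2 : ((1/2:ℝ)^j)^2 = (1/4:ℝ)^j := (quarter_pow j).symm
      calc (2:ℝ)^(m+2) * ((1/2:ℝ)^j)^(m+2) ≤ 2^(m+2) * ((1/2:ℝ)^j)^2 := by
            apply mul_le_mul_of_nonneg_left h1 (by positivity)
        _ = 2^(m+2) * (1/4:ℝ)^j := by rw [h2]
    have hj2 : 3*((j:ℝ)+2) * (1/4:ℝ)^j ≤ 6 * (1/2:ℝ)^j := by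
      have h1 : ((j:ℝ)+2) ≤ 2^(j+1) := real_two_pow j
      have h2 : (1/4:ℝ)^j = (1/2:ℝ)^j * (1/2:ℝ)^j := by
        rw [← mul_pow]; norm_num
      have h3 : 3*((j:ℝ)+2) * (1/4:ℝ)^j ≤ 3 * 2^(j+1) * ((1/2:ℝ)^j * (1/2:ℝ)^j) := by
        rw [← h2]
        apply mul_le_mul_of_nonneg_right _ (by positivity)
        nlinarith [pow_pos (show (0:ℝ) < 2 by norm_num) (j+1)]
      have h4 : (2:ℝ)^(j+1) * (1/2:ℝ)^j = 2 := by
        rw [pow_succ, mul_comm ((2:ℝ)^j) 2, mul_assoc, ← mul_pow]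
        norm_num
      calc 3*((j:ℝ)+2) * (1/4:ℝ)^j ≤ 3 * 2^(j+1) * ((1/2:ℝ)^j * (1/2:ℝ)^j) := h3
        _ = 3 * ((2:ℝ)^(j+1) * (1/2:ℝ)^j) * (1/2:ℝ)^j := by ring
        _ = 6 * (1/2:ℝ)^j := by rw [h4]; ring
    calc 3*((j:ℝ)+2) * (2*(1/2:ℝ)^j)^(m+2)
        ≤ 3*((j:ℝ)+2) * (2^(m+2) * (1/4:ℝ)^j) := by
          apply mul_le_mul_of_nonneg_left hb (by positivity)
      _ = 2^(m+2) * (3*((j:ℝ)+2) * (1/4:ℝ)^j) := by ring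
      _ ≤ 2^(m+2) * (6 * (1/2:ℝ)^j) := by
          apply mul_le_mul_of_nonneg_left hj2 (by positivity)
      _ = 6 * 2^(m+2) * (1/2:ℝ)^j := by ring
  · intro x hx
    have hs0 := sf_pos k x
    have hs1 := sf_lt_one k hx
    obtain ⟨j, hj1, hj2⟩ := exists_shell_down hs0 hs1
    refine ⟨j, ?_, ?_⟩
    · have hle := th_le_on_shell k hx hj1
      show (‖th m k x‖₊ : ℝ≥0∞) ≤ ENNReal.ofReal (3*((j:ℝ)+2))
      have hnn : (‖th m k x‖₊ : ℝ≥0∞) = ENNReal.ofReal |th m k x| := by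
        rw [← Real.norm_eq_abs]
        exact (ofReal_norm _).symm
      rw [hnn]
      exact ENNReal.ofReal_le_ofReal hle
    · have : radSq x < sf m k x := by
        unfold sf
        nlinarith [pow_pos (eps_pos k) 2]
      linarith

/-! ## the b integral bound -/

def pp (m : ℕ) : ℝ := ((m:ℝ)+2)/2

lemma pp_pos : 0 < pp m := by unfold pp; positivity

lemma pp_nonneg : 0 ≤ pp m := (pp_pos).le

lemma two_mul_pp : 2 * pp m = (m:ℝ) + 2 := by unfold pp; ring

-- |hf| pointwise bound
def Pf (m k : ℕ) (x : X m) : ℝ := ((m:ℝ)+2) * (eps k)^2 / (sf m k x)^2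

def Qf (m k : ℕ) (x : X m) : ℝ := 2*(m:ℝ) / (sf m k x * (1 - Real.log (sf m k x)))

lemma Pf_nonneg (k : ℕ) (x : X m) : 0 ≤ Pf m k x := by
  unfold Pf; positivity

lemma Qf_nonneg (k : ℕ) {x : X m} (hx : x ∈ Dst m) : 0 ≤ Qf m k x := by
  have hs := sf_pos k x
  have hlog := Real.log_neg hs (sf_lt_one k hx)
  unfold Qf
  exact div_nonneg (by positivity) (le_of_lt (mul_pos hs (by linarith)))

lemma hf_abs_le (k : ℕ) {x : X m} (hx : x ∈ Dst m) :
    |hf m k x| ≤ 1 + Pf m k x + Qf m k x := by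
  have hs := sf_pos k x
  have hlog := Real.log_neg hs (sf_lt_one k hx)
  have hF1 := Ff_ge_one k hx
  have hFhalf : (1 - Real.log (sf m k x))/2 ≤ Ff m k x := by
    unfold Ff; linarith
  have hu0 := radSq_nonneg x
  have hus : radSq x ≤ sf m k x := by
    unfold sf; nlinarith [pow_pos (eps_pos k) 2]
  have hden : 0 < (sf m k x)^2 * Ff m k x := by positivity
  have hN0 : 0 ≤ ((m:ℝ)+2) * (eps k)^2 + (m:ℝ) * radSq x := by positivity
  have habs : |hf m k x| ≤
      1 + (((m:ℝ)+2) * (eps k)^2 + (m:ℝ) * radSq x) / ((sf m k x)^2 * Ff m k x) := by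
    have hq : 0 ≤ (((m:ℝ)+2) * (eps k)^2 + (m:ℝ) * radSq x) /
        ((sf m k x)^2 * Ff m k x) := by positivity
    have hrw : hf m k x = 1 - (((m:ℝ)+2) * (eps k)^2 + (m:ℝ) * radSq x) /
        ((sf m k x)^2 * Ff m k x) := rfl
    rw [hrw, abs_le]
    constructor <;> linarith
  refine le_trans habs ?_
  have hsplit : (((m:ℝ)+2) * (eps k)^2 + (m:ℝ) * radSq x) / ((sf m k x)^2 * Ff m k x) =
      ((m:ℝ)+2) * (eps k)^2 / ((sf m k x)^2 * Ff m k x) +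
      (m:ℝ) * radSq x / ((sf m k x)^2 * Ff m k x) := add_div _ _ _
  have h1 : ((m:ℝ)+2) * (eps k)^2 / ((sf m k x)^2 * Ff m k x) ≤ Pf m k x := by
    unfold Pf
    apply div_le_div_of_nonneg_left (by positivity) (by positivity)
    nlinarith [sq_nonneg (sf m k x), mul_pos hs hs]
  have h2 : (m:ℝ) * radSq x / ((sf m k x)^2 * Ff m k x) ≤ Qf m k x := by
    unfold Qf
    have hGpos : 0 < 1 - Real.log (sf m k x) := by linarith
    rw [div_le_div_iff₀ hden (mul_pos hs hGpos)]
    have hG2F : 1 - Real.log (sf m k x) ≤ 2 * Ff m k x := by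
      unfold Ff; linarith
    have step1 : (m:ℝ) * radSq x * (sf m k x * (1 - Real.log (sf m k x))) ≤
        (m:ℝ) * sf m k x * (sf m k x * (1 - Real.log (sf m k x))) := by
      apply mul_le_mul_of_nonneg_right _ (by positivity)
      apply mul_le_mul_of_nonneg_left hus (Nat.cast_nonneg m)
    have step2 : (m:ℝ) * sf m k x * (sf m k x * (1 - Real.log (sf m k x))) ≤
        (m:ℝ) * sf m k x * (sf m k x * (2 * Ff m k x)) := by
      apply mul_le_mul_of_nonneg_left _ (by positivity)
      apply mul_le_mul_of_nonneg_left hG2F hs.le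
    calc (m:ℝ) * radSq x * (sf m k x * (1 - Real.log (sf m k x)))
        ≤ (m:ℝ) * sf m k x * (sf m k x * (2 * Ff m k x)) := le_trans step1 step2
      _ = 2*(m:ℝ) * ((sf m k x)^2 * Ff m k x) := by ring
  linarith [hsplit ▸ (add_le_add h1 h2)]

lemma rpow3 {a b c q : ℝ} (ha : 0 ≤ a) (hb : 0 ≤ b) (hc : 0 ≤ c) (hq : 0 ≤ q) :
    (a+b+c)^q ≤ 3^q * (a^q + b^q + c^q) := by
  set M := max a (max b c) with hM
  have hM0 : 0 ≤ M := le_trans ha (le_max_left _ _)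
  have hsum : a+b+c ≤ 3*M := by
    have h1 : a ≤ M := le_max_left _ _
    have h2 : b ≤ M := le_trans (le_max_left _ _) (le_max_right _ _)
    have h3 : c ≤ M := le_trans (le_max_right _ _) (le_max_right _ _)
    linarith
  have hMq : M^q ≤ a^q + b^q + c^q := by
    have hya : 0 ≤ a^q := Real.rpow_nonneg ha q
    have hyb : 0 ≤ b^q := Real.rpow_nonneg hb q
    have hyc : 0 ≤ c^q := Real.rpow_nonneg hc q
    rcases max_choice a (max b c) with h | h
    · rw [hM, h]; linarith
    · rcases max_choice b c with h2 | h2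
      · rw [hM, h, h2]; linarith
      · rw [hM, h, h2]; linarith
  calc (a+b+c)^q ≤ (3*M)^q := Real.rpow_le_rpow (by linarith) hsum hq
    _ = 3^q * M^q := Real.mul_rpow (by norm_num) hM0
    _ ≤ 3^q * (a^q + b^q + c^q) := by
        apply mul_le_mul_of_nonneg_left hMq (Real.rpow_nonneg (by norm_num) q)

-- pointwise ENNReal bound for the drift
lemma bf_pointwise (k : ℕ) {x : X m} (hx : x ∈ Dst m) :
    (‖bf m k x‖₊ : ℝ≥0∞) ^ (pp m) ≤
      ENNReal.ofReal ((3:ℝ)^(pp m)) +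
      (ENNReal.ofReal ((3:ℝ)^(pp m) * (Pf m k x)^(pp m)) +
       ENNReal.ofReal ((3:ℝ)^(pp m) * (Qf m k x)^(pp m))) := by
  have hnorm : ‖bf m k x‖ = |hf m k x| := by
    unfold bf
    rw [EuclideanSpace.norm_single, Real.norm_eq_abs]
  have h0 : (‖bf m k x‖₊ : ℝ≥0∞) = ENNReal.ofReal |hf m k x| := by
    rw [show (‖bf m k x‖₊ : ℝ≥0∞) = ENNReal.ofReal ‖bf m k x‖ from (ofReal_norm _).symm, hnorm]
  rw [h0, ENNReal.ofReal_rpow_of_nonneg (abs_nonneg _) pp_nonneg]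
  have hP := Pf_nonneg k x
  have hQ := Qf_nonneg k hx
  have hchain : |hf m k x|^(pp m) ≤
      (3:ℝ)^(pp m) + ((3:ℝ)^(pp m) * (Pf m k x)^(pp m) + (3:ℝ)^(pp m) * (Qf m k x)^(pp m)) := by
    have h1 : |hf m k x|^(pp m) ≤ (1 + Pf m k x + Qf m k x)^(pp m) :=
      Real.rpow_le_rpow (abs_nonneg _) (hf_abs_le k hx) pp_nonneg
    have h2 : ((1:ℝ) + Pf m k x + Qf m k x)^(pp m) ≤
        3^(pp m) * ((1:ℝ)^(pp m) + (Pf m k x)^(pp m) + (Qf m k x)^(pp m)) :=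
      rpow3 zero_le_one hP hQ pp_nonneg
    rw [Real.one_rpow] at h2
    nlinarith [Real.rpow_nonneg (show (0:ℝ) ≤ 3 by norm_num) (pp m)]
  calc ENNReal.ofReal (|hf m k x|^(pp m))
      ≤ ENNReal.ofReal ((3:ℝ)^(pp m) +
          ((3:ℝ)^(pp m) * (Pf m k x)^(pp m) + (3:ℝ)^(pp m) * (Qf m k x)^(pp m))) :=
        ENNReal.ofReal_le_ofReal hchain
    _ = ENNReal.ofReal ((3:ℝ)^(pp m)) +
        (ENNReal.ofReal ((3:ℝ)^(pp m) * (Pf m k x)^(pp m)) +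
         ENNReal.ofReal ((3:ℝ)^(pp m) * (Qf m k x)^(pp m))) := by
        rw [ENNReal.ofReal_add (Real.rpow_nonneg (by norm_num) _)
          (by positivity)]
        congr 1
        rw [ENNReal.ofReal_add]
        · positivity
        · positivity

lemma sq_rpow_eq {y : ℝ} (hy : 0 ≤ y) : (y^2)^(pp m) = y^(m+2) := by
  rw [← Real.rpow_natCast y 2, ← Real.rpow_mul hy]
  rw [show ((2:ℕ):ℝ) * pp m = ((m+2:ℕ):ℝ) by push_cast [pp]; ring]
  rw [Real.rpow_natCast]

lemma sixteenth_pow (j : ℕ) : (1/16:ℝ)^j = ((1/4:ℝ)^j)^2 := by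
  rw [show (1/16:ℝ) = (1/4:ℝ)^2 by norm_num, ← pow_mul, ← pow_mul, Nat.mul_comm]

lemma pow_sq_four (j : ℕ) : ((2:ℝ)^(j+1))^2 = 4^(j+1) := by
  rw [← pow_mul, show (4:ℝ) = 2^2 by norm_num, ← pow_mul, Nat.mul_comm]

lemma sqrt_tP (k j : ℕ) :
    Real.sqrt ((4:ℝ)^(j+1) * (eps k)^2) = 2^(j+1) * eps k := by
  rw [show (4:ℝ)^(j+1) * (eps k)^2 = ((2:ℝ)^(j+1) * eps k)^2 by
    rw [mul_pow, pow_sq_four]]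
  exact Real.sqrt_sq (mul_nonneg (by positivity) (eps_pos k).le)

lemma half_pow_cancel (j : ℕ) : (1/4:ℝ)^j * 2^(j+2) = 4 * (1/2:ℝ)^j := by
  have h : (1/4:ℝ)^j * 2^j = (1/2:ℝ)^j := by
    rw [← mul_pow]; norm_num
  calc (1/4:ℝ)^j * 2^(j+2) = ((1/4:ℝ)^j * 2^j) * 4 := by rw [pow_add]; ring
    _ = 4 * (1/2:ℝ)^j := by rw [h]; ring

lemma Pf_term (k j : ℕ) :
    (3:ℝ)^(pp m) * (((m:ℝ)+2) * (1/16:ℝ)^j / (eps k)^2)^(pp m) *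
      (2*Real.sqrt ((4:ℝ)^(j+1) * (eps k)^2))^(m+2) ≤
    ((3:ℝ)^(pp m) * ((m:ℝ)+2)^(pp m) * 4^(m+2)) * (1/2:ℝ)^j := by
  have he := eps_pos k
  rw [sqrt_tP]
  have hA : (((m:ℝ)+2) * (1/16:ℝ)^j / (eps k)^2)^(pp m) =
      ((m:ℝ)+2)^(pp m) * ((1/4:ℝ)^j)^(m+2) / (eps k)^(m+2) := by
    rw [Real.div_rpow (by positivity) (by positivity)]
    rw [Real.mul_rpow (by positivity) (by positivity)]
    rw [sixteenth_pow, sq_rpow_eq (by positivity : (0:ℝ) ≤ (1/4:ℝ)^j),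
      sq_rpow_eq he.le]
  have hB : (2*((2:ℝ)^(j+1) * eps k))^(m+2) = ((2:ℝ)^(j+2))^(m+2) * (eps k)^(m+2) := by
    rw [show 2*((2:ℝ)^(j+1) * eps k) = (2:ℝ)^(j+2) * eps k by rw [pow_succ]; ring]
    rw [mul_pow]
  rw [hA, hB]
  have heps : (eps k)^(m+2) > 0 := by positivity
  have hEq : (3:ℝ)^(pp m) * (((m:ℝ)+2)^(pp m) * ((1/4:ℝ)^j)^(m+2) / (eps k)^(m+2)) *
      (((2:ℝ)^(j+2))^(m+2) * (eps k)^(m+2)) =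
      (3:ℝ)^(pp m) * ((m:ℝ)+2)^(pp m) * ((1/4:ℝ)^j * 2^(j+2))^(m+2) := by
    rw [mul_pow]
    field_simp
  rw [hEq, half_pow_cancel, mul_pow]
  have hle : ((1/2:ℝ)^j)^(m+2) ≤ (1/2:ℝ)^j := by
    have := pow_le_pow_of_le_one (show (0:ℝ) ≤ (1/2:ℝ)^j by positivity)
      (pow_le_one₀ (by norm_num) (by norm_num)) (show 1 ≤ m+2 by omega)
    simpa using this
  have hc : (0:ℝ) ≤ (3:ℝ)^(pp m) * ((m:ℝ)+2)^(pp m) * 4^(m+2) := by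
    have := Real.rpow_nonneg (show (0:ℝ) ≤ 3 by norm_num) (pp m)
    have := Real.rpow_nonneg (show (0:ℝ) ≤ (m:ℝ)+2 by positivity) (pp m)
    positivity
  calc (3:ℝ)^(pp m) * ((m:ℝ)+2)^(pp m) * (4^(m+2) * ((1/2:ℝ)^j)^(m+2))
      ≤ (3:ℝ)^(pp m) * ((m:ℝ)+2)^(pp m) * (4^(m+2) * (1/2:ℝ)^j) := by
        apply mul_le_mul_of_nonneg_left _ (by
          have h1 := Real.rpow_nonneg (show (0:ℝ) ≤ 3 by norm_num) (pp m)
          have h2 := Real.rpow_nonneg (show (0:ℝ) ≤ (m:ℝ)+2 by positivity) (pp m)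
          positivity)
        apply mul_le_mul_of_nonneg_left hle (by positivity)
    _ = ((3:ℝ)^(pp m) * ((m:ℝ)+2)^(pp m) * 4^(m+2)) * (1/2:ℝ)^j := by ring

lemma Pf_integral (k : ℕ) :
    ∫⁻ x in Dst m, ENNReal.ofReal ((3:ℝ)^(pp m) * (Pf m k x)^(pp m)) ≤
      ENNReal.ofReal (2 * ((3:ℝ)^(pp m) * ((m:ℝ)+2)^(pp m) * 4^(m+2))) := by
  have happ := shell_bound (m := m)
    (fun x => ENNReal.ofReal ((3:ℝ)^(pp m) * (Pf m k x)^(pp m)))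
    (fun j => ENNReal.ofReal ((3:ℝ)^(pp m) * (((m:ℝ)+2) * (1/16:ℝ)^j / (eps k)^2)^(pp m)))
    (fun j => (4:ℝ)^(j+1) * (eps k)^2) ?_
  · refine le_trans happ ?_
    refine le_trans (ENNReal.tsum_le_tsum (fun j => ?_))
      (tsum_geo_bound ((3:ℝ)^(pp m) * ((m:ℝ)+2)^(pp m) * 4^(m+2)) ?_)
    · rw [← ENNReal.ofReal_mul (by
        have h1 := Real.rpow_nonneg (show (0:ℝ) ≤ 3 by norm_num) (pp m)
        have h2 := Real.rpow_nonneg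
          (show (0:ℝ) ≤ ((m:ℝ)+2) * (1/16:ℝ)^j / (eps k)^2 by positivity) (pp m)
        positivity)]
      apply ENNReal.ofReal_le_ofReal
      rw [show (3:ℝ)^(pp m) * (((m:ℝ)+2) * (1/16:ℝ)^j / (eps k)^2)^(pp m) *
          (2*Real.sqrt ((4:ℝ)^(j+1) * (eps k)^2))^(m+2) =
          (3:ℝ)^(pp m) * (((m:ℝ)+2) * (1/16:ℝ)^j / (eps k)^2)^(pp m) *
          (2*Real.sqrt ((4:ℝ)^(j+1) * (eps k)^2))^(m+2) from rfl]
      exact Pf_term k j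
    · have h1 := Real.rpow_nonneg (show (0:ℝ) ≤ 3 by norm_num) (pp m)
      have h2 := Real.rpow_nonneg (show (0:ℝ) ≤ (m:ℝ)+2 by positivity) (pp m)
      positivity
  · intro x hx
    have hs := sf_pos k x
    have he2 : (0:ℝ) < (eps k)^2 := pow_pos (eps_pos k) 2
    have hse : (eps k)^2 ≤ sf m k x := by
      unfold sf; nlinarith [radSq_nonneg x]
    obtain ⟨j, hj1, hj2⟩ := exists_shell_up he2 hse
    refine ⟨j, ?_, ?_⟩
    · show ENNReal.ofReal ((3:ℝ)^(pp m) * (Pf m k x)^(pp m)) ≤ _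
      apply ENNReal.ofReal_le_ofReal
      apply mul_le_mul_of_nonneg_left _ (Real.rpow_nonneg (by norm_num) _)
      apply Real.rpow_le_rpow (Pf_nonneg k x) _ pp_nonneg
      have h4j : (0:ℝ) < (4:ℝ)^j * (eps k)^2 := by positivity
      have hP1 : Pf m k x ≤ ((m:ℝ)+2) * (eps k)^2 / ((4:ℝ)^j * (eps k)^2)^2 := by
        unfold Pf
        apply div_le_div_of_nonneg_left (by positivity) (by positivity)
        apply pow_le_pow_left₀ h4j.le hj1
      refine le_trans hP1 (le_of_eq ?_)
      rw [mul_pow]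
      rw [show ((4:ℝ)^j)^2 = 16^j by
        rw [← pow_mul, show (16:ℝ) = 4^2 by norm_num, ← pow_mul, Nat.mul_comm]]
      rw [one_div, inv_pow]
      have h16 : ((16:ℝ)^j) ≠ 0 := by positivity
      have hek : (eps k)^2 ≠ 0 := he2.ne'
      field_simp
    · show radSq x < (4:ℝ)^(j+1) * (eps k)^2
      have hlt : radSq x < sf m k x := by
        unfold sf; nlinarith [pow_pos (eps_pos k) 2]
      linarith

def Sval : ℝ := ∑' j : ℕ, ((j:ℝ)+1)^(-(3/2):ℝ)

lemma hS_summable : Summable (fun j : ℕ => ((j:ℝ)+1)^(-(3/2):ℝ)) := by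
  have h : Summable (fun n : ℕ => (n:ℝ)^(-(3/2):ℝ)) :=
    Real.summable_nat_rpow.2 (by norm_num)
  have h2 := h.comp_injective Nat.succ_injective
  refine h2.congr fun j => ?_
  simp only [Function.comp_apply]
  push_cast
  norm_num

lemma log_four_ge_one : (1:ℝ) ≤ Real.log 4 := by
  have h2 : Real.log 4 = 2 * Real.log 2 := by
    rw [show (4:ℝ) = 2^2 by norm_num, Real.log_pow]; push_cast; ring
  have := Real.log_two_gt_d9
  linarith

lemma Qf_on_shell (k : ℕ) {x : X m} (hx : x ∈ Dst m) {j : ℕ}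
    (hj1 : (1/4:ℝ)^(j+1) ≤ sf m k x) (hj2 : sf m k x < (1/4:ℝ)^j) :
    Qf m k x ≤ 2*(m:ℝ) * 4^(j+1) / ((j:ℝ)+1) := by
  have hs := sf_pos k x
  have hlog := Real.log_neg hs (sf_lt_one k hx)
  have hG : (j:ℝ) + 1 ≤ 1 - Real.log (sf m k x) := by
    have h1 : Real.log (sf m k x) < Real.log ((1/4:ℝ)^j) := Real.log_lt_log hs hj2
    have h2 : Real.log ((1/4:ℝ)^j) = -((j:ℝ) * Real.log 4) := by
      rw [Real.log_pow, one_div, Real.log_inv]; push_cast; ring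
    have h3 : (j:ℝ) ≤ (j:ℝ) * Real.log 4 := by
      nlinarith [log_four_ge_one, Nat.cast_nonneg (α := ℝ) j]
    rw [h2] at h1
    linarith
  have hGpos : (0:ℝ) < 1 - Real.log (sf m k x) := by linarith
  have hd : (0:ℝ) < (1/4:ℝ)^(j+1) * ((j:ℝ)+1) := by positivity
  have hstep : Qf m k x ≤ 2*(m:ℝ) / ((1/4:ℝ)^(j+1) * ((j:ℝ)+1)) := by
    unfold Qf
    apply div_le_div_of_nonneg_left (by positivity) hd
    apply mul_le_mul hj1 hG (by positivity) hs.le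
  refine le_trans hstep (le_of_eq ?_)
  rw [one_div, inv_pow]
  have h4 : ((4:ℝ)^(j+1)) ≠ 0 := by positivity
  have hj : ((j:ℝ)+1) ≠ 0 := by positivity
  field_simp

lemma Qf_term (j : ℕ) :
    (3:ℝ)^(pp m) * (2*(m:ℝ) * 4^(j+1) / ((j:ℝ)+1))^(pp m) *
      (2*Real.sqrt ((1/4:ℝ)^j))^(m+2) =
    ((3:ℝ)^(pp m) * (2*(m:ℝ))^(pp m) * 4^(m+2)) * (((j:ℝ)+1)^(-(pp m))) := by
  have hsq : Real.sqrt ((1/4:ℝ)^j) = (1/2:ℝ)^j := by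
    rw [quarter_pow]
    exact Real.sqrt_sq (by positivity)
  rw [hsq]
  have hsplit : (2*(m:ℝ) * 4^(j+1) / ((j:ℝ)+1))^(pp m) =
      (2*(m:ℝ))^(pp m) * ((2:ℝ)^(j+1))^(m+2) * ((j:ℝ)+1)^(-(pp m)) := by
    rw [Real.div_rpow (by positivity) (by positivity)]
    rw [Real.mul_rpow (by positivity) (by positivity)]
    rw [show ((4:ℝ)^(j+1)) = ((2:ℝ)^(j+1))^2 from (pow_sq_four j).symm]
    rw [sq_rpow_eq (by positivity : (0:ℝ) ≤ (2:ℝ)^(j+1))]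
    rw [Real.rpow_neg (by positivity), div_eq_mul_inv]
  rw [hsplit]
  have hkey : ((2:ℝ)^(j+1))^(m+2) * (2*(1/2:ℝ)^j)^(m+2) = 4^(m+2) := by
    rw [← mul_pow]
    congr 1
    have h : (2:ℝ)^(j+1) * (1/2:ℝ)^j = 2 := by
      rw [pow_succ, mul_comm ((2:ℝ)^j) 2, mul_assoc, ← mul_pow]
      norm_num
    calc (2:ℝ)^(j+1) * (2*(1/2:ℝ)^j) = 2 * ((2:ℝ)^(j+1) * (1/2:ℝ)^j) := by ring
      _ = 4 := by rw [h]; norm_num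
  calc (3:ℝ)^(pp m) * ((2*(m:ℝ))^(pp m) * ((2:ℝ)^(j+1))^(m+2) * ((j:ℝ)+1)^(-(pp m))) *
        (2*(1/2:ℝ)^j)^(m+2)
      = (3:ℝ)^(pp m) * (2*(m:ℝ))^(pp m) *
          (((2:ℝ)^(j+1))^(m+2) * (2*(1/2:ℝ)^j)^(m+2)) * ((j:ℝ)+1)^(-(pp m)) := by ring
    _ = ((3:ℝ)^(pp m) * (2*(m:ℝ))^(pp m) * 4^(m+2)) * (((j:ℝ)+1)^(-(pp m))) := by
        rw [hkey]

lemma Qf_sum_le :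
    ∑' j : ℕ, ENNReal.ofReal (((3:ℝ)^(pp m) * (2*(m:ℝ))^(pp m) * 4^(m+2)) *
        (((j:ℝ)+1)^(-(pp m)))) ≤
      ENNReal.ofReal (((3:ℝ)^(pp m) * (2*(m:ℝ))^(pp m) * 4^(m+2)) * Sval) := by
  set K2 := (3:ℝ)^(pp m) * (2*(m:ℝ))^(pp m) * 4^(m+2) with hK2
  have hK2nn : 0 ≤ K2 := by
    rw [hK2]
    have h1 := Real.rpow_nonneg (show (0:ℝ) ≤ 3 by norm_num) (pp m)
    have h2 := Real.rpow_nonneg (show (0:ℝ) ≤ 2*(m:ℝ) by positivity) (pp m)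
    positivity
  rcases Nat.eq_zero_or_pos m with hm | hm
  · subst hm
    have hz : K2 = 0 := by
      rw [hK2]
      rw [show (2*((0:ℕ):ℝ)) = 0 by norm_num]
      rw [Real.zero_rpow (pp_pos (m := 0)).ne']
      ring
    simp [hz]
  · have hple : ∀ j : ℕ, ((j:ℝ)+1)^(-(pp m)) ≤ ((j:ℝ)+1)^(-(3/2):ℝ) := by
      intro j
      apply Real.rpow_le_rpow_of_exponent_le (by push_cast; linarith [Nat.cast_nonneg (α := ℝ) j])
      have : (3/2:ℝ) ≤ pp m := by
        unfold pp
        have : (1:ℝ) ≤ (m:ℝ) := by exact_mod_cast hm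
        linarith
      linarith
    calc ∑' j : ℕ, ENNReal.ofReal (K2 * (((j:ℝ)+1)^(-(pp m))))
        ≤ ∑' j : ℕ, ENNReal.ofReal (K2 * (((j:ℝ)+1)^(-(3/2):ℝ))) := by
          apply ENNReal.tsum_le_tsum
          intro j
          apply ENNReal.ofReal_le_ofReal
          apply mul_le_mul_of_nonneg_left (hple j) hK2nn
      _ = ENNReal.ofReal (∑' j : ℕ, K2 * (((j:ℝ)+1)^(-(3/2):ℝ))) := by
          rw [ENNReal.ofReal_tsum_of_nonneg]
          · intro j
            exact mul_nonneg hK2nn (Real.rpow_nonneg (by positivity) _)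
          · exact hS_summable.mul_left K2
      _ = ENNReal.ofReal (K2 * Sval) := by rw [tsum_mul_left]; rfl

lemma Qf_integral (k : ℕ) :
    ∫⁻ x in Dst m, ENNReal.ofReal ((3:ℝ)^(pp m) * (Qf m k x)^(pp m)) ≤
      ENNReal.ofReal (((3:ℝ)^(pp m) * (2*(m:ℝ))^(pp m) * 4^(m+2)) * Sval) := by
  have happ := shell_bound (m := m)
    (fun x => ENNReal.ofReal ((3:ℝ)^(pp m) * (Qf m k x)^(pp m)))
    (fun j => ENNReal.ofReal ((3:ℝ)^(pp m) * (2*(m:ℝ) * 4^(j+1) / ((j:ℝ)+1))^(pp m)))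
    (fun j => (1/4:ℝ)^j) ?_
  · refine le_trans happ (le_trans (ENNReal.tsum_le_tsum (fun j => ?_)) Qf_sum_le)
    rw [← ENNReal.ofReal_mul (by
      have h1 := Real.rpow_nonneg (show (0:ℝ) ≤ 3 by norm_num) (pp m)
      have h2 := Real.rpow_nonneg
        (show (0:ℝ) ≤ 2*(m:ℝ) * 4^(j+1) / ((j:ℝ)+1) by positivity) (pp m)
      positivity)]
    apply ENNReal.ofReal_le_ofReal
    rw [Qf_term j]
  · intro x hx
    have hs := sf_pos k x
    obtain ⟨j, hj1, hj2⟩ := exists_shell_down hs (sf_lt_one k hx)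
    refine ⟨j, ?_, ?_⟩
    · show ENNReal.ofReal ((3:ℝ)^(pp m) * (Qf m k x)^(pp m)) ≤ _
      apply ENNReal.ofReal_le_ofReal
      apply mul_le_mul_of_nonneg_left _ (Real.rpow_nonneg (by norm_num) _)
      exact Real.rpow_le_rpow (Qf_nonneg k hx) (Qf_on_shell k hx hj1 hj2) pp_nonneg
    · show radSq x < (1/4:ℝ)^j
      have hlt : radSq x < sf m k x := by
        unfold sf; nlinarith [pow_pos (eps_pos k) 2]
      linarith

lemma measurable_sf (k : ℕ) : Measurable (sf m k) :=
  (contDiff_sf k).continuous.measurable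

lemma measurable_Bpiece (k : ℕ) :
    Measurable (fun x : X m => ENNReal.ofReal ((3:ℝ)^(pp m) * (Pf m k x)^(pp m))) := by
  apply ENNReal.measurable_ofReal.comp
  apply Measurable.const_mul
  apply ((Real.continuous_rpow_const pp_nonneg).measurable).comp
  exact Measurable.div measurable_const ((measurable_sf k).pow_const 2)

lemma measurable_Cpiece (k : ℕ) :
    Measurable (fun x : X m => ENNReal.ofReal ((3:ℝ)^(pp m) * (Qf m k x)^(pp m))) := by
  apply ENNReal.measurable_ofReal.comp
  apply Measurable.const_mul
  apply ((Real.continuous_rpow_const pp_nonneg).measurable).comp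
  exact Measurable.div measurable_const
    ((measurable_sf k).mul (measurable_const.sub (Real.measurable_log.comp (measurable_sf k))))

lemma vol_Dst_le_one : volume (Dst m) ≤ 1 := by
  have h := vol_box (m := m) (1/16)
  have hsub : Dst m ⊆ {x : X m | radSq x < 1/16 ∧ x (L m) ∈ Set.Ioo (0:ℝ) 1} := by
    intro x hx
    refine ⟨?_, hx.2⟩
    have := hx.1
    norm_num at this ⊢
    linarith
  refine le_trans (measure_mono hsub) (le_trans h ?_)
  have hsq : Real.sqrt (1/16 : ℝ) = 1/4 := by
    rw [show (1/16:ℝ) = (1/4:ℝ)^2 by norm_num]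
    exact Real.sqrt_sq (by norm_num)
  rw [hsq, show (2 * (1/4:ℝ)) = 1/2 by norm_num]
  calc ENNReal.ofReal ((1/2:ℝ)^(m+2)) ≤ ENNReal.ofReal 1 :=
        ENNReal.ofReal_le_ofReal (pow_le_one₀ (by norm_num) (by norm_num))
    _ = 1 := ENNReal.ofReal_one

def Mb (m : ℕ) : ℝ :=
  (3:ℝ)^(pp m) + (2 * ((3:ℝ)^(pp m) * ((m:ℝ)+2)^(pp m) * 4^(m+2))
    + ((3:ℝ)^(pp m) * (2*(m:ℝ))^(pp m) * 4^(m+2)) * Sval)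

lemma Sval_nonneg : 0 ≤ Sval :=
  tsum_nonneg fun j => Real.rpow_nonneg (by positivity) _

lemma bf_integral_bound (k : ℕ) :
    ∫⁻ x in Dst m, (‖bf m k x‖₊ : ℝ≥0∞) ^ (pp m) ≤ ENNReal.ofReal (Mb m) := by
  have h3nn : (0:ℝ) ≤ (3:ℝ)^(pp m) := Real.rpow_nonneg (by norm_num) _
  have hMBnn : (0:ℝ) ≤ 2 * ((3:ℝ)^(pp m) * ((m:ℝ)+2)^(pp m) * 4^(m+2)) := by
    have h2 := Real.rpow_nonneg (show (0:ℝ) ≤ (m:ℝ)+2 by positivity) (pp m)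
    positivity
  have hMCnn : (0:ℝ) ≤ ((3:ℝ)^(pp m) * (2*(m:ℝ))^(pp m) * 4^(m+2)) * Sval := by
    have h2 := Real.rpow_nonneg (show (0:ℝ) ≤ 2*(m:ℝ) by positivity) (pp m)
    have h3 := Sval_nonneg
    positivity
  calc ∫⁻ x in Dst m, (‖bf m k x‖₊ : ℝ≥0∞) ^ (pp m)
      ≤ ∫⁻ x in Dst m, (ENNReal.ofReal ((3:ℝ)^(pp m)) +
          (ENNReal.ofReal ((3:ℝ)^(pp m) * (Pf m k x)^(pp m)) +
           ENNReal.ofReal ((3:ℝ)^(pp m) * (Qf m k x)^(pp m)))) := by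
        apply setLIntegral_mono
          (measurable_const.add ((measurable_Bpiece k).add (measurable_Cpiece k)))
        intro x hx
        exact bf_pointwise k hx
    _ = (∫⁻ _ in Dst m, ENNReal.ofReal ((3:ℝ)^(pp m))) +
        ∫⁻ x in Dst m, (ENNReal.ofReal ((3:ℝ)^(pp m) * (Pf m k x)^(pp m)) +
           ENNReal.ofReal ((3:ℝ)^(pp m) * (Qf m k x)^(pp m))) :=
        lintegral_add_left measurable_const _
    _ = (∫⁻ _ in Dst m, ENNReal.ofReal ((3:ℝ)^(pp m))) +
        ((∫⁻ x in Dst m, ENNReal.ofReal ((3:ℝ)^(pp m) * (Pf m k x)^(pp m))) +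
         (∫⁻ x in Dst m, ENNReal.ofReal ((3:ℝ)^(pp m) * (Qf m k x)^(pp m)))) := by
        rw [lintegral_add_left (measurable_Bpiece k)]
    _ ≤ ENNReal.ofReal ((3:ℝ)^(pp m)) +
        (ENNReal.ofReal (2 * ((3:ℝ)^(pp m) * ((m:ℝ)+2)^(pp m) * 4^(m+2))) +
         ENNReal.ofReal (((3:ℝ)^(pp m) * (2*(m:ℝ))^(pp m) * 4^(m+2)) * Sval)) := by
        refine add_le_add ?_ (add_le_add (Pf_integral k) (Qf_integral k))
        rw [lintegral_const, Measure.restrict_apply_univ]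
        calc ENNReal.ofReal ((3:ℝ)^(pp m)) * volume (Dst m)
            ≤ ENNReal.ofReal ((3:ℝ)^(pp m)) * 1 :=
              mul_le_mul_right vol_Dst_le_one _
          _ = ENNReal.ofReal ((3:ℝ)^(pp m)) := mul_one _
    _ = ENNReal.ofReal (Mb m) := by
        unfold Mb
        rw [ENNReal.ofReal_add h3nn (by positivity), ENNReal.ofReal_add hMBnn hMCnn]

end S7

/-- failure of quantitative local boundedness for steady divergence-free drifts
bounded in `L^{(n-1)/2}`, on a slab `D = B'_{R₀/2} × (0,1)` (with `x = (x', z)`,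
`z = x_{n-1}` the last coordinate). -/
theorem stmt7 (n : ℕ) (hn : 3 ≤ n) :
    ∃ R₀ ∈ Set.Ioo (0:ℝ) 1,
    ∃ (b : ℕ → EuclideanSpace ℝ (Fin n) → EuclideanSpace ℝ (Fin n))
      (θ : ℕ → EuclideanSpace ℝ (Fin n) → ℝ),
      ∀ D : Set (EuclideanSpace ℝ (Fin n)),
      D = {x : EuclideanSpace ℝ (Fin n) |
            radSq x < (R₀/2)^2 ∧ x ⟨n-1, by omega⟩ ∈ Set.Ioo (0:ℝ) 1} →
      (∀ k, ContDiffOn ℝ (⊤ : ℕ∞) (b k) D) ∧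
      (∀ k, ContDiffOn ℝ (⊤ : ℕ∞) (θ k) D) ∧
      (∀ k, ∀ x ∈ D, diverg (b k) x = 0) ∧
      (∀ k, ∀ x ∈ D, 0 ≤ θ k x) ∧
      (∀ k, ∀ x ∈ D, -lap (θ k) x + ⟪b k x, gradient (θ k) x⟫ = 0) ∧
      (∃ M : ℝ, ∀ k,
        (∫⁻ x in D, (‖b k x‖₊ : ℝ≥0∞) ^ (((n:ℝ) - 1)/2)) ≤ ENNReal.ofReal M) ∧
      (∃ M : ℝ, ∀ k, (∫⁻ x in D, (‖θ k x‖₊ : ℝ≥0∞)) ≤ ENNReal.ofReal M) ∧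
      (∀ M : ℝ, ∃ k, ∃ x : EuclideanSpace ℝ (Fin n),
        radSq x < (R₀/4)^2 ∧ x ⟨n-1, by omega⟩ ∈ Set.Ioo (1/4:ℝ) (3/4) ∧ M < θ k x) := by
  obtain ⟨m, rfl⟩ : ∃ m, n = m + 3 := ⟨n - 3, by omega⟩
  refine ⟨1/2, by norm_num, S7.bf m, S7.th m, ?_⟩
  intro D hD
  have hDeq : D = S7.Dst m := hD
  subst hDeq
  refine ⟨fun k => S7.contDiffOn_bf k, fun k => (S7.contDiff_th k).contDiffOn,
    ?_, ?_, ?_, ?_, ?_, ?_⟩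
  · intro k x hx
    exact S7.diverg_bf k x (S7.Ff_ne k hx)
  · intro k x hx
    exact S7.th_nonneg k hx
  · intro k x hx
    exact S7.pde k x (S7.Ff_ne k hx)
  · refine ⟨S7.Mb m, fun k => ?_⟩
    have hexp : (((m+3:ℕ):ℝ) - 1)/2 = S7.pp m := by
      unfold S7.pp
      push_cast
      ring
    rw [hexp]
    exact S7.bf_integral_bound k
  · exact ⟨12 * 2^(m+2), fun k => S7.th_integral_bound k⟩
  · intro M
    obtain ⟨k, hk⟩ := exists_nat_gt M
    refine ⟨k, S7.x0 m, ?_, ?_, ?_⟩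
    · rw [S7.radSq_x0]
      norm_num
    · show S7.x0 m (S7.L m) ∈ Set.Ioo (1/4:ℝ) (3/4)
      rw [S7.x0_L]
      norm_num
    · have h1 := S7.th_x0 (m := m) k
      linarith

end
end

section
/- Let m ≥ 1 be an integer and let p, q ∈ [1,∞] and θ ∈ (0,1] satisfy −m/q = θ(−m/p) + (1−θ)/2. Then there exists a constant C > 0 depending only on m, p, q such that for every r ∈ [1/2, 1] and every continuous function u : B_r → ℝ (B_r the open ball of radius r centered at 0 in ℝ^m) with finite ‖u‖_{C^{1/2}(B_r)}, one has ‖u‖_{L^q(B_r)} ≤ C ‖u‖_{L^p(B_r)}^θ ‖u‖_{C^{1/2}(B_r)}^{1−θ}. -/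
/-!
If `|u x₀| = v`, the Hölder bound keeps `|u| ≥ v / 2` on a ball of radius `≈ (v / H)²` around
`x₀`, and since `r ≥ 1/8` this ball contains one of comparable radius inside `B_r`.
Chebyshev's inequality then gives `v ^ (p + 2m) ≲ H ^ (2m) ‖u‖_p ^ p`, i.e.
`‖u‖_∞ ≲ ‖u‖_p ^ α H ^ (1 - α)` with `α = p / (p + 2m)`. Combined with
`‖u‖_q ≤ ‖u‖_∞ ^ (1 - p/q) ‖u‖_p ^ (p/q)` this is the claim, because the scaling relation says
exactly `θ = α (1 - p/q) + p/q`; it also forces `p ≤ q`, and `q = ∞, θ = 1` when `p = ∞`.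
-/

open MeasureTheory Metric Set Function
open scoped ENNReal NNReal

noncomputable section

/-- `L^p`-type norm (valued in `ℝ≥0∞`) of an `ℝ≥0∞`-valued function, with the
essential supremum convention when `p = ∞`. -/
def eLp {α : Type*} [MeasurableSpace α] (μ : Measure α) (p : ℝ≥0∞) (f : α → ℝ≥0∞) : ℝ≥0∞ :=
  if p = ∞ then essSup f μ else (∫⁻ a, f a ^ p.toReal ∂μ) ^ (1 / p.toReal)

theorem eLp_nnnorm_eq_eLpNorm {α F : Type*} [MeasurableSpace α] [NormedAddCommGroup F]
    (μ : Measure α) {p : ℝ≥0∞} (hp : p ≠ 0) (f : α → F) :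
    eLp μ p (fun x => (‖f x‖₊ : ℝ≥0∞)) = eLpNorm f p μ := by
  unfold eLp
  split_ifs with hp_top
  · subst hp_top; rfl
  · rw [eLpNorm_eq_lintegral_rpow_enorm_toReal hp hp_top]; rfl

/-- The exponent `θ` solving the scaling relation in dimension `d`. Here `q = 0` encodes `q = ∞`
(as `ENNReal.toReal ∞ = 0`), giving `θ = p / (p + 2 d)`. -/
def gnExponent (d p q : ℝ) : ℝ := p / (p + 2 * d) * (1 - p / q) + p / q

theorem gnExponent_eq_of_scaling {d p q θ : ℝ} (hd : 0 ≤ d) (hp : 0 < p)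
    (hrel : -(d / q) = θ * (-(d / p)) + (1 - θ) / 2) : θ = gnExponent d p q := by
  unfold gnExponent
  rcases eq_or_ne q 0 with rfl | hq
  · simp only [div_zero, neg_zero, sub_zero, mul_one, add_zero] at hrel ⊢
    field_simp at hrel ⊢
    linarith
  · field_simp at hrel ⊢
    linarith

theorem le_of_gnExponent_le_one {d p q : ℝ} (hd : 0 < d) (hp : 0 < p) (hq : 0 < q)
    (h : gnExponent d p q ≤ 1) : p ≤ q := by
  have hgap : 1 - gnExponent d p q = 2 * d / (p + 2 * d) * (1 - p / q) := by
    unfold gnExponent; field_simp; ring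
  have : 0 ≤ 1 - p / q :=
    nonneg_of_mul_nonneg_right (hgap ▸ sub_nonneg.mpr h) (by positivity)
  rwa [sub_nonneg, div_le_one hq] at this

theorem eq_top_and_eq_one_of_scaling_top {m : ℕ} (hm : 1 ≤ m) {q : ℝ≥0∞} (hq : q ≠ 0) {θ : ℝ}
    (hθ : θ ≤ 1)
    (hrel : -((m : ℝ) / q.toReal) = θ * (-((m : ℝ) / (∞ : ℝ≥0∞).toReal)) + (1 - θ) / 2) :
    q = ∞ ∧ θ = 1 := by
  simp only [ENNReal.toReal_top, div_zero, neg_zero, mul_zero, zero_add] at hrel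
  have hnonneg : 0 ≤ (m : ℝ) / q.toReal := by positivity
  have hzero : (m : ℝ) / q.toReal = 0 := by linarith
  refine ⟨?_, by linarith⟩
  rcases div_eq_zero_iff.mp hzero with h | h
  · exact absurd h (by positivity)
  · exact ((ENNReal.toReal_eq_zero_iff q).mp h).resolve_left hq

theorem eLpNorm_le_rpow_mul_eLpNorm_rpow {α E : Type*} [MeasurableSpace α] {μ : Measure α}
    [NormedAddCommGroup E] {f : α → E} {p q B : ℝ≥0∞} (hp0 : p ≠ 0) (hp : p ≠ ∞) (hpq : p ≤ q)
    (hf : AEStronglyMeasurable f μ) (hB : ∀ᵐ x ∂μ, ‖f x‖ₑ ≤ B) :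
    eLpNorm f q μ ≤ B ^ (1 - p.toReal / q.toReal) * eLpNorm f p μ ^ (p.toReal / q.toReal) := by
  rcases eq_or_ne q ∞ with rfl | hq
  · simpa [eLpNorm_exponent_top] using eLpNormEssSup_le_of_ae_enorm_bound hB
  have hp' : 0 < p.toReal := ENNReal.toReal_pos hp0 hp
  have hpq' : p.toReal ≤ q.toReal := ENNReal.toReal_mono hq hpq
  have hq' : 0 < q.toReal := hp'.trans_le hpq'
  have hint : ∫⁻ x, ‖f x‖ₑ ^ q.toReal ∂μ ≤
      B ^ (q.toReal - p.toReal) * ∫⁻ x, ‖f x‖ₑ ^ p.toReal ∂μ := by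
    rw [← lintegral_const_mul'' _ (hf.enorm.pow_const _)]
    refine lintegral_mono_ae (hB.mono fun x hx => ?_)
    calc ‖f x‖ₑ ^ q.toReal = ‖f x‖ₑ ^ (q.toReal - p.toReal) * ‖f x‖ₑ ^ p.toReal := by
          rw [← ENNReal.rpow_add_of_nonneg _ _ (sub_nonneg.mpr hpq') hp'.le, sub_add_cancel]
      _ ≤ B ^ (q.toReal - p.toReal) * ‖f x‖ₑ ^ p.toReal := by
          gcongr
  have hq0 : q ≠ 0 := (hp0.bot_lt.trans_le hpq).ne'
  rw [eLpNorm_eq_lintegral_rpow_enorm_toReal hq0 hq,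
    eLpNorm_eq_lintegral_rpow_enorm_toReal hp0 hp]
  calc (∫⁻ x, ‖f x‖ₑ ^ q.toReal ∂μ) ^ (1 / q.toReal)
      ≤ (B ^ (q.toReal - p.toReal) * ∫⁻ x, ‖f x‖ₑ ^ p.toReal ∂μ) ^ (1 / q.toReal) := by
        gcongr
    _ = _ := by
        rw [ENNReal.mul_rpow_of_nonneg _ _ (by positivity), ← ENNReal.rpow_mul,
          ← ENNReal.rpow_mul]
        congr 2 <;> field_simp

theorem exists_ball_subset_ball_inter_ball {E : Type*} [SeminormedAddCommGroup E]
    [NormedSpace ℝ E] {x : E} {r s : ℝ} (hx : x ∈ ball 0 r) (hs : 0 < s) (hsr : s ≤ r) :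
    ∃ y, ball y s ⊆ ball x (2 * s) ∩ ball 0 r := by
  have hr : 0 < r := hs.trans_le hsr
  have hx' : ‖x‖ < r := mem_ball_zero_iff.mp hx
  have hc : 0 ≤ 1 - s / r := sub_nonneg.mpr ((div_le_one hr).mpr hsr)
  refine ⟨(1 - s / r) • x, fun z hz => ⟨?_, ?_⟩⟩
  · have hyx : dist ((1 - s / r) • x) x < s := by
      rw [dist_eq_norm, sub_smul, one_smul, sub_sub_cancel_left, norm_neg, norm_smul,
        Real.norm_of_nonneg (by positivity)]
      calc s / r * ‖x‖ < s / r * r := by gcongr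
        _ = s := div_mul_cancel₀ s hr.ne'
    rw [mem_ball] at hz ⊢
    linarith [dist_triangle z ((1 - s / r) • x) x]
  · rw [mem_ball_zero_iff]
    calc ‖z‖ ≤ dist z ((1 - s / r) • x) + ‖(1 - s / r) • x‖ := by
          rw [dist_eq_norm]; exact norm_le_norm_sub_add z _
      _ < s + (1 - s / r) * r := by
          rw [norm_smul, Real.norm_of_nonneg hc]
          exact add_lt_add_of_lt_of_le (mem_ball.mp hz) (by gcongr)
      _ = r := by field_simp; ring

theorem half_abs_le_abs_of_holder {X : Type*} [PseudoMetricSpace X] {u : X → ℝ} {s : Set X}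
    {H : ℝ} (hH : 0 < H) (hu : ∀ x ∈ s, ∀ y ∈ s, |u x - u y| ≤ H * dist x y ^ (1 / 2 : ℝ))
    {x₀ x : X} (hx₀ : x₀ ∈ s) (hx : x ∈ s) (hd : dist x x₀ < (|u x₀| / (2 * H)) ^ 2) :
    |u x₀| / 2 ≤ |u x| := by
  have hsqrt : dist x x₀ ^ (1 / 2 : ℝ) ≤ |u x₀| / (2 * H) := by
    rw [← Real.sqrt_eq_rpow]
    exact Real.sqrt_le_left (by positivity) |>.mpr hd.le
  have hclose : |u x - u x₀| ≤ |u x₀| / 2 :=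
    calc |u x - u x₀| ≤ H * dist x x₀ ^ (1 / 2 : ℝ) := hu x hx x₀ hx₀
      _ ≤ H * (|u x₀| / (2 * H)) := by gcongr
      _ = |u x₀| / 2 := by field_simp
  linarith [abs_sub_abs_le_abs_sub (u x₀) (u x), abs_sub_comm (u x) (u x₀)]

def holderQuotients {X : Type*} [MetricSpace X] (γ : ℝ) (s : Set X) (u : X → ℝ) : Set ℝ :=
  (fun z : X × X => |u z.1 - u z.2| / dist z.1 z.2 ^ γ) ''
    {z : X × X | z.1 ∈ s ∧ z.2 ∈ s ∧ z.1 ≠ z.2}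

/-- The `C^γ` norm of `u` on `s`. -/
def holderNorm {X : Type*} [MetricSpace X] (γ : ℝ) (s : Set X) (u : X → ℝ) : ℝ :=
  sSup ((fun x => |u x|) '' s) + sSup (holderQuotients γ s u)

section HolderNorm

variable {X : Type*} [MetricSpace X] {γ : ℝ} {s : Set X} {u : X → ℝ}

theorem sSup_holderQuotients_nonneg : 0 ≤ sSup (holderQuotients γ s u) :=
  Real.sSup_nonneg (by rintro _ ⟨_, -, rfl⟩; positivity)

theorem abs_le_holderNorm (hb : BddAbove ((fun x => |u x|) '' s)) {x : X} (hx : x ∈ s) :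
    |u x| ≤ holderNorm γ s u :=
  le_add_of_le_of_nonneg (le_csSup hb ⟨x, hx, rfl⟩) sSup_holderQuotients_nonneg

theorem abs_sub_le_holderNorm_mul_dist_rpow (hb : BddAbove (holderQuotients γ s u)) {x y : X}
    (hx : x ∈ s) (hy : y ∈ s) : |u x - u y| ≤ holderNorm γ s u * dist x y ^ γ := by
  have hsup : 0 ≤ sSup ((fun x => |u x|) '' s) :=
    Real.sSup_nonneg (by rintro _ ⟨_, -, rfl⟩; positivity)
  calc |u x - u y| ≤ sSup (holderQuotients γ s u) * dist x y ^ γ := by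
        rcases eq_or_ne x y with rfl | hxy
        · rw [sub_self, abs_zero]
          exact mul_nonneg sSup_holderQuotients_nonneg (Real.rpow_nonneg dist_nonneg _)
        · have hd : 0 < dist x y ^ γ := Real.rpow_pos_of_pos (dist_pos.mpr hxy) _
          rw [← div_le_iff₀ hd]
          exact le_csSup hb ⟨(x, y), ⟨hx, hy, hxy⟩, rfl⟩
    _ ≤ holderNorm γ s u * dist x y ^ γ := by
        gcongr
        exact le_add_of_nonneg_left hsup

end HolderNorm

theorem rpow_mul_measure_le_eLpNorm_restrict_rpow {α F : Type*} [MeasurableSpace α]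
    {μ : Measure α} [NormedAddCommGroup F] {p : ℝ≥0∞} (hp0 : p ≠ 0) (hp : p ≠ ∞) {t S : Set α}
    {f : α → F} (hf : AEStronglyMeasurable f (μ.restrict t)) (hS : S ⊆ t) {ε : ℝ≥0∞}
    (hε : S ⊆ {x | ε ≤ ‖f x‖ₑ}) :
    ε ^ p.toReal * μ S ≤ eLpNorm f p (μ.restrict t) ^ p.toReal := by
  rw [← Measure.restrict_eq_self μ hS]
  exact (mul_le_mul_right (measure_mono hε) _).trans (mul_meas_ge_le_pow_eLpNorm' _ hp0 hp hf _)

theorem ENNReal.le_rpow_mul_rpow_mul_rpow_of_rpow_add_le {v K A H : ℝ≥0∞} {a b : ℝ}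
    (hab : 0 < a + b) (h : v ^ (a + b) ≤ K * A ^ a * H ^ b) :
    v ≤ K ^ (1 / (a + b)) * A ^ (a / (a + b)) * H ^ (b / (a + b)) := by
  have hinv : 0 ≤ 1 / (a + b) := by positivity
  calc v = (v ^ (a + b)) ^ (1 / (a + b)) := by
        rw [← ENNReal.rpow_mul, mul_one_div_cancel hab.ne', ENNReal.rpow_one]
    _ ≤ (K * A ^ a * H ^ b) ^ (1 / (a + b)) := ENNReal.rpow_le_rpow h hinv
    _ = K ^ (1 / (a + b)) * A ^ (a / (a + b)) * H ^ (b / (a + b)) := by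
        rw [ENNReal.mul_rpow_of_nonneg _ _ hinv, ENNReal.mul_rpow_of_nonneg _ _ hinv,
          ← ENNReal.rpow_mul, ← ENNReal.rpow_mul, mul_one_div, mul_one_div]

theorem rpow_add_two_mul_eq_mul_half_rpow_mul_pow {p v H : ℝ} (hv : 0 < v) (hH : 0 < H) (d : ℕ) :
    v ^ (p + 2 * d) =
      2 ^ p * 8 ^ d * H ^ (2 * d : ℝ) * ((v / 2) ^ p * ((v / (2 * H)) ^ 2 / 2) ^ d) := by
  have h2d : (2 * d : ℝ) = (2 * d : ℕ) := by push_cast; ring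
  rw [Real.rpow_add hv, Real.div_rpow hv.le zero_le_two, h2d, Real.rpow_natCast,
    Real.rpow_natCast, show (v / (2 * H)) ^ 2 / 2 = v ^ 2 / (8 * H ^ 2) by ring,
    div_pow, mul_pow, ← pow_mul, ← pow_mul, mul_comm 2 d]
  field_simp

section AddHaar

variable {E : Type*} [NormedAddCommGroup E] [NormedSpace ℝ E] [MeasurableSpace E] [BorelSpace E]
  [FiniteDimensional ℝ E] (μ : Measure E) [μ.IsAddHaarMeasure]

open Module

theorem ofReal_abs_rpow_le_eLpNorm_of_holder {p : ℝ≥0∞} (hp0 : p ≠ 0) (hp : p ≠ ∞) {r : ℝ}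
    (hr : 1 / 8 ≤ r) {u : E → ℝ} {H : ℝ} (hu : AEStronglyMeasurable u (μ.restrict (ball 0 r)))
    (hbound : ∀ x ∈ ball (0 : E) r, |u x| ≤ H)
    (hholder : ∀ x ∈ ball (0 : E) r, ∀ y ∈ ball (0 : E) r, |u x - u y| ≤ H * dist x y ^ (1 / 2 : ℝ))
    {x₀ : E} (hx₀ : x₀ ∈ ball (0 : E) r) :
    ENNReal.ofReal |u x₀| ^ (p.toReal + 2 * finrank ℝ E) ≤
      ENNReal.ofReal (2 ^ p.toReal * 8 ^ finrank ℝ E) / μ (ball 0 1) *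
        eLpNorm u p (μ.restrict (ball 0 r)) ^ p.toReal *
        ENNReal.ofReal H ^ (2 * finrank ℝ E : ℝ) := by
  set d := finrank ℝ E
  obtain ⟨v, hv_def⟩ : ∃ v, |u x₀| = v := ⟨_, rfl⟩
  rw [hv_def]
  have hp' : 0 < p.toReal := ENNReal.toReal_pos hp0 hp
  rcases (hv_def ▸ abs_nonneg (u x₀) : 0 ≤ v).eq_or_lt with hv | hv
  · rw [← hv, ENNReal.ofReal_zero, ENNReal.zero_rpow_of_pos (by positivity)]
    exact zero_le
  have hvH : v ≤ H := hv_def ▸ hbound x₀ hx₀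
  have hH : 0 < H := hv.trans_le hvH
  -- `|u| ≥ v / 2` on `ball x₀ (2 * s)`, and `s ≤ 1 / 8` because `v ≤ H`.
  set s := (v / (2 * H)) ^ 2 / 2 with hs_def
  have hs : 0 < s := by positivity
  have hsr : s ≤ r := by
    have : v / (2 * H) ≤ 1 / 2 := by rw [div_le_iff₀ (by positivity)]; linarith
    have : (v / (2 * H)) ^ 2 ≤ (1 / 2) ^ 2 := by gcongr
    rw [hs_def]
    linarith
  obtain ⟨y, hy⟩ := exists_ball_subset_ball_inter_ball hx₀ hs hsr
  have hlarge : ball y s ⊆ {x | ENNReal.ofReal (v / 2) ≤ ‖u x‖ₑ} := fun z hz => by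
    obtain ⟨hzx₀, hzr⟩ := hy hz
    rw [mem_ofPred_eq, Real.enorm_eq_ofReal_abs, ← hv_def]
    refine ENNReal.ofReal_le_ofReal (half_abs_le_abs_of_holder hH hholder hx₀ hzr ?_)
    rw [mem_ball, hs_def] at hzx₀
    rw [hv_def]
    linarith
  have hmarkov : ENNReal.ofReal ((v / 2) ^ p.toReal * s ^ d) * μ (ball 0 1) ≤
      eLpNorm u p (μ.restrict (ball 0 r)) ^ p.toReal := by
    rw [ENNReal.ofReal_mul (by positivity), mul_assoc,
      ← ENNReal.ofReal_rpow_of_nonneg (by positivity) hp'.le, ← Measure.addHaar_ball_of_pos μ y hs]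
    exact rpow_mul_measure_le_eLpNorm_restrict_rpow hp0 hp hu (hy.trans inter_subset_right) hlarge
  have hscale := rpow_add_two_mul_eq_mul_half_rpow_mul_pow (p := p.toReal) hv hH d
  have hω : μ (ball (0 : E) 1) ≠ 0 := (measure_ball_pos μ 0 one_pos).ne'
  have hω' : μ (ball (0 : E) 1) ≠ ∞ := measure_ball_lt_top.ne
  rw [ENNReal.ofReal_rpow_of_nonneg hv.le (by positivity), hscale,
    ENNReal.ofReal_mul (by positivity), ENNReal.ofReal_mul (by positivity),
    ← ENNReal.ofReal_rpow_of_nonneg hH.le (by positivity)]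
  calc _ ≤ ENNReal.ofReal (2 ^ p.toReal * 8 ^ d) * ENNReal.ofReal H ^ (2 * d : ℝ) *
        (eLpNorm u p (μ.restrict (ball 0 r)) ^ p.toReal / μ (ball 0 1)) := by
        gcongr
        exact (ENNReal.le_div_iff_mul_le (.inl hω) (.inl hω')).mpr hmarkov
    _ = _ := by simp only [div_eq_mul_inv]; ring

theorem exists_enorm_le_mul_eLpNorm_rpow_mul_rpow {p : ℝ≥0∞} (hp0 : p ≠ 0) (hp : p ≠ ∞) :
    ∃ c : ℝ≥0, ∀ r : ℝ, 1 / 8 ≤ r → ∀ (u : E → ℝ) (H : ℝ),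
      AEStronglyMeasurable u (μ.restrict (ball 0 r)) →
      (∀ x ∈ ball (0 : E) r, |u x| ≤ H) →
      (∀ x ∈ ball (0 : E) r, ∀ y ∈ ball (0 : E) r, |u x - u y| ≤ H * dist x y ^ (1 / 2 : ℝ)) →
      ∀ x ∈ ball (0 : E) r, ‖u x‖ₑ ≤
        c * eLpNorm u p (μ.restrict (ball 0 r)) ^ (p.toReal / (p.toReal + 2 * finrank ℝ E)) *
          ENNReal.ofReal H ^ (1 - p.toReal / (p.toReal + 2 * finrank ℝ E)) := by
  have hp' : 0 < p.toReal := ENNReal.toReal_pos hp0 hp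
  have hsum : 0 < p.toReal + 2 * finrank ℝ E := by positivity
  set K := ENNReal.ofReal (2 ^ p.toReal * 8 ^ finrank ℝ E) / μ (ball 0 1)
  have hK : K ^ (1 / (p.toReal + 2 * finrank ℝ E)) ≠ ∞ :=
    ENNReal.rpow_ne_top_of_nonneg (by positivity)
      (ENNReal.div_ne_top ENNReal.ofReal_ne_top (measure_ball_pos μ 0 one_pos).ne')
  refine ⟨(K ^ (1 / (p.toReal + 2 * finrank ℝ E))).toNNReal,
    fun r hr u H hu hbound hholder x hx => ?_⟩
  have h := ENNReal.le_rpow_mul_rpow_mul_rpow_of_rpow_add_le hsum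
    (ofReal_abs_rpow_le_eLpNorm_of_holder μ hp0 hp hr hu hbound hholder hx)
  rwa [ENNReal.coe_toNNReal hK, Real.enorm_eq_ofReal_abs, one_sub_div hsum.ne', add_sub_cancel_left]

theorem exists_eLpNorm_le_mul_eLpNorm_rpow_mul_rpow_of_holder {p q : ℝ≥0∞} (hp0 : p ≠ 0)
    (hp : p ≠ ∞) (hpq : p ≤ q) :
    ∃ C > (0 : ℝ≥0), ∀ r : ℝ, 1 / 8 ≤ r → ∀ (u : E → ℝ) (H : ℝ),
      AEStronglyMeasurable u (μ.restrict (ball 0 r)) →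
      (∀ x ∈ ball (0 : E) r, |u x| ≤ H) →
      (∀ x ∈ ball (0 : E) r, ∀ y ∈ ball (0 : E) r, |u x - u y| ≤ H * dist x y ^ (1 / 2 : ℝ)) →
      eLpNorm u q (μ.restrict (ball 0 r)) ≤
        C * eLpNorm u p (μ.restrict (ball 0 r)) ^ gnExponent (finrank ℝ E) p.toReal q.toReal *
          ENNReal.ofReal H ^ (1 - gnExponent (finrank ℝ E) p.toReal q.toReal) := by
  obtain ⟨c, hc⟩ := exists_enorm_le_mul_eLpNorm_rpow_mul_rpow μ hp0 hp
  refine ⟨max 1 c, zero_lt_one.trans_le (le_max_left _ _),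
    fun r hr u H hu hbound hholder => ?_⟩
  set α := p.toReal / (p.toReal + 2 * finrank ℝ E)
  set a := eLpNorm u p (μ.restrict (ball 0 r))
  set h := ENNReal.ofReal H
  have hα : 0 ≤ α := by positivity
  have hratio : 0 ≤ p.toReal / q.toReal ∧ p.toReal / q.toReal ≤ 1 := by
    refine ⟨by positivity, ?_⟩
    rcases eq_or_ne q ∞ with rfl | hq
    · simp
    · exact div_le_one_of_le₀ (ENNReal.toReal_mono hq hpq) ENNReal.toReal_nonneg
  set e := 1 - p.toReal / q.toReal
  have he : 0 ≤ e := sub_nonneg.mpr hratio.2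
  have he1 : e ≤ 1 := sub_le_self _ hratio.1
  have hbound_ae : ∀ᵐ x ∂μ.restrict (ball 0 r), ‖u x‖ₑ ≤ c * a ^ α * h ^ (1 - α) :=
    ae_restrict_of_forall_mem measurableSet_ball (hc r hr u H hu hbound hholder)
  have hce : (c : ℝ≥0∞) ^ e ≤ (max 1 c : ℝ≥0) :=
    calc (c : ℝ≥0∞) ^ e ≤ ((max 1 c : ℝ≥0) : ℝ≥0∞) ^ e := by gcongr; exact_mod_cast le_max_right _ _
      _ ≤ ((max 1 c : ℝ≥0) : ℝ≥0∞) ^ (1 : ℝ) :=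
          ENNReal.rpow_le_rpow_of_exponent_le (by exact_mod_cast le_max_left _ _) he1
      _ = _ := ENNReal.rpow_one _
  calc eLpNorm u q (μ.restrict (ball 0 r))
      ≤ (c * a ^ α * h ^ (1 - α)) ^ e * a ^ (p.toReal / q.toReal) :=
        eLpNorm_le_rpow_mul_eLpNorm_rpow hp0 hp hpq hu hbound_ae
    _ = c ^ e * a ^ gnExponent (finrank ℝ E) p.toReal q.toReal *
          h ^ (1 - gnExponent (finrank ℝ E) p.toReal q.toReal) := by
        have hθ : gnExponent (finrank ℝ E) p.toReal q.toReal = α * e + p.toReal / q.toReal := rfl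
        rw [ENNReal.mul_rpow_of_nonneg _ _ he, ENNReal.mul_rpow_of_nonneg _ _ he,
          ← ENNReal.rpow_mul, ← ENNReal.rpow_mul, hθ,
          ENNReal.rpow_add_of_nonneg _ _ (mul_nonneg hα he) hratio.1,
          show 1 - (α * e + p.toReal / q.toReal) = (1 - α) * e by ring]
        ring
    _ ≤ _ := by gcongr

end AddHaar

/-- Gagliardo–Nirenberg-type interpolation between Lebesgue norms and the
Hölder-`1/2` norm on balls `B_r ⊆ ℝ^m`, `r ∈ [1/2, 1]`. -/
theorem stmt18 (m : ℕ) (hm : 1 ≤ m) (p q : ℝ≥0∞) (hp : 1 ≤ p) (hq : 1 ≤ q)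
    (θ : ℝ) (hθ : θ ∈ Set.Ioc (0:ℝ) 1)
    (hrel : -((m : ℝ) / q.toReal) = θ * (-((m : ℝ) / p.toReal)) + (1 - θ) / 2) :
    ∃ C > (0:ℝ),
      ∀ r ∈ Set.Icc (1/2 : ℝ) 1,
      ∀ u : EuclideanSpace ℝ (Fin m) → ℝ,
      ContinuousOn u (ball 0 r) →
      BddAbove ((fun x => |u x|) '' ball (0 : EuclideanSpace ℝ (Fin m)) r) →
      BddAbove ((fun z : EuclideanSpace ℝ (Fin m) × EuclideanSpace ℝ (Fin m) =>
          |u z.1 - u z.2| / dist z.1 z.2 ^ (1/2 : ℝ)) ''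
        {z : EuclideanSpace ℝ (Fin m) × EuclideanSpace ℝ (Fin m) |
          z.1 ∈ ball 0 r ∧ z.2 ∈ ball 0 r ∧ z.1 ≠ z.2}) →
      ∀ H : ℝ,
      H = sSup ((fun x => |u x|) '' ball (0 : EuclideanSpace ℝ (Fin m)) r)
          + sSup ((fun z : EuclideanSpace ℝ (Fin m) × EuclideanSpace ℝ (Fin m) =>
              |u z.1 - u z.2| / dist z.1 z.2 ^ (1/2 : ℝ)) ''
            {z : EuclideanSpace ℝ (Fin m) × EuclideanSpace ℝ (Fin m) |
              z.1 ∈ ball 0 r ∧ z.2 ∈ ball 0 r ∧ z.1 ≠ z.2}) →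
      eLp (volume.restrict (ball (0 : EuclideanSpace ℝ (Fin m)) r)) q
          (fun x => (‖u x‖₊ : ℝ≥0∞)) ≤
        ENNReal.ofReal C *
          (eLp (volume.restrict (ball (0 : EuclideanSpace ℝ (Fin m)) r)) p
            (fun x => (‖u x‖₊ : ℝ≥0∞))) ^ θ *
          ENNReal.ofReal H ^ (1 - θ) := by
  have hp0 : p ≠ 0 := (zero_lt_one.trans_le hp).ne'
  have hq0 : q ≠ 0 := (zero_lt_one.trans_le hq).ne'
  rcases eq_or_ne p ∞ with rfl | hp_top
  · obtain ⟨rfl, rfl⟩ := eq_top_and_eq_one_of_scaling_top hm hq0 hθ.2 hrel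
    exact ⟨1, one_pos, fun r _ u _ _ _ H _ => by simp⟩
  have hp' : 0 < p.toReal := ENNReal.toReal_pos hp0 hp_top
  have hθ_eq : θ = gnExponent m p.toReal q.toReal :=
    gnExponent_eq_of_scaling (Nat.cast_nonneg m) hp' hrel
  have hpq : p ≤ q := by
    rcases eq_or_ne q ∞ with rfl | hq_top
    · exact le_top
    · exact (ENNReal.toReal_le_toReal hp_top hq_top).mp (le_of_gnExponent_le_one
        (by exact_mod_cast hm) hp' (ENNReal.toReal_pos hq0 hq_top) (hθ_eq ▸ hθ.2))
  obtain ⟨C, hC0, hC⟩ := exists_eLpNorm_le_mul_eLpNorm_rpow_mul_rpow_of_holder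
    (volume : Measure (EuclideanSpace ℝ (Fin m))) hp0 hp_top hpq
  refine ⟨C, by exact_mod_cast hC0, fun r hr u hu hb₁ hb₂ H hH => ?_⟩
  change H = holderNorm (1 / 2) (ball 0 r) u at hH
  subst hH
  rw [eLp_nnnorm_eq_eLpNorm _ hp0, eLp_nnnorm_eq_eLpNorm _ hq0, ENNReal.ofReal_coe_nnreal, hθ_eq]
  simpa only [finrank_euclideanSpace_fin] using hC r (by linarith [hr.1]) u _
    (hu.aestronglyMeasurable measurableSet_ball) (fun x hx => abs_le_holderNorm hb₁ hx)
    (fun x hx y hy => abs_sub_le_holderNorm_mul_dist_rpow hb₂ hx hy)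

end
end
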